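/- arXiv:1712.02737 — 9 statements merged into one kernel-verified Lean document; each statement's English description precedes it below -/
import Mathlib

section
/- For all vectors v, w ∈ V whose polar form vanishes (polar Q v w = 0), the Graf product satisfies (ι v) ⋄ (ι w) = (ι v) * (ι w) (the exterior/wedge product in Λ(V)) and (ι v) ⋄ (ι w) = -((ι w) ⋄ (ι v)). -/
open CliffordAlgebra ExteriorAlgebra

/-- The Graf product on the exterior algebra: Clifford multiplication transported through
the canonical linear equivalence `CliffordAlgebra.equivExterior Q`. -/
noncomputable def graf {V : Type*} [AddCommGroup V] [Module ℝ V] (Q : QuadraticForm ℝ V)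
    (a b : ExteriorAlgebra ℝ V) : ExteriorAlgebra ℝ V :=
  CliffordAlgebra.equivExterior Q ((CliffordAlgebra.equivExterior Q).symm a *
    (CliffordAlgebra.equivExterior Q).symm b)

/-- The volume element of the Clifford algebra: the ordered product
`ι (e 0) * ι (e 1) * ⋯ * ι (e (n-1))`. -/
noncomputable def cliffVol {V : Type*} [AddCommGroup V] [Module ℝ V] {n : ℕ}
    (Q : QuadraticForm ℝ V) (e : Module.Basis (Fin n) ℝ V) : CliffordAlgebra Q :=
  ((List.finRange n).map fun i => CliffordAlgebra.ι Q (e i)).prod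

/-- The volume form in the exterior algebra. -/
noncomputable def volForm {V : Type*} [AddCommGroup V] [Module ℝ V] {n : ℕ}
    (Q : QuadraticForm ℝ V) (e : Module.Basis (Fin n) ℝ V) : ExteriorAlgebra ℝ V :=
  CliffordAlgebra.equivExterior Q (cliffVol Q e)

/-- The Hodge operator `⋆ f := f ⋄ v`. -/
noncomputable def hodge {V : Type*} [AddCommGroup V] [Module ℝ V] {n : ℕ}
    (Q : QuadraticForm ℝ V) (e : Module.Basis (Fin n) ℝ V) (f : ExteriorAlgebra ℝ V) :
    ExteriorAlgebra ℝ V :=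
  graf Q f (volForm Q e)

/-- `P₊ g := (1/2) • (g + ⋆g)`. -/
noncomputable def Pplus {V : Type*} [AddCommGroup V] [Module ℝ V] {n : ℕ}
    (Q : QuadraticForm ℝ V) (e : Module.Basis (Fin n) ℝ V) (g : ExteriorAlgebra ℝ V) :
    ExteriorAlgebra ℝ V :=
  (1/2 : ℝ) • (g + hodge Q e g)

/-- `P₋ g := (1/2) • (g - ⋆g)`. -/
noncomputable def Pminus {V : Type*} [AddCommGroup V] [Module ℝ V] {n : ℕ}
    (Q : QuadraticForm ℝ V) (e : Module.Basis (Fin n) ℝ V) (g : ExteriorAlgebra ℝ V) :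
    ExteriorAlgebra ℝ V :=
  (1/2 : ℝ) • (g - hodge Q e g)

/-- Lower truncation: the projection keeping graded components of degrees `0, …, n/2`
and annihilating degrees `n/2 + 1, …`. -/
noncomputable def PLow {V : Type*} [AddCommGroup V] [Module ℝ V] (n : ℕ)
    (f : ExteriorAlgebra ℝ V) : ExteriorAlgebra ℝ V :=
  ∑ k ∈ Finset.range (n / 2 + 1),
    (DirectSum.decompose (fun i : ℕ => ⋀[ℝ]^i V) f k : ExteriorAlgebra ℝ V)

/-- Truncated Graf product `f ◆₊ g := 2 • P_L (P₊ f ⋄ P₊ g)`. -/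
noncomputable def tGrafP {V : Type*} [AddCommGroup V] [Module ℝ V] {n : ℕ}
    (Q : QuadraticForm ℝ V) (e : Module.Basis (Fin n) ℝ V) (f g : ExteriorAlgebra ℝ V) :
    ExteriorAlgebra ℝ V :=
  (2 : ℝ) • PLow n (graf Q (Pplus Q e f) (Pplus Q e g))

/-- Truncated Graf product `f ◆₋ g := 2 • P_L (P₋ f ⋄ P₋ g)`. -/
noncomputable def tGrafM {V : Type*} [AddCommGroup V] [Module ℝ V] {n : ℕ}
    (Q : QuadraticForm ℝ V) (e : Module.Basis (Fin n) ℝ V) (f g : ExteriorAlgebra ℝ V) :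
    ExteriorAlgebra ℝ V :=
  (2 : ℝ) • PLow n (graf Q (Pminus Q e f) (Pminus Q e g))

/-- on vectors with vanishing polar form, the Graf product is the wedge
product and is antisymmetric. -/
theorem graf_eq_wedge_of_polar_eq_zero
    (p q n : ℕ) (hn : n = p + q)
    {V : Type*} [AddCommGroup V] [Module ℝ V]
    (Q : QuadraticForm ℝ V) (e : Module.Basis (Fin n) ℝ V)
    (horth : ∀ i j : Fin n, i ≠ j → QuadraticMap.polar Q (e i) (e j) = 0)
    (hQpos : ∀ i : Fin n, (i : ℕ) < p → Q (e i) = 1)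
    (hQneg : ∀ i : Fin n, p ≤ (i : ℕ) → Q (e i) = -1) :
    ∀ v w : V, QuadraticMap.polar Q v w = 0 →
      graf Q (ExteriorAlgebra.ι ℝ v) (ExteriorAlgebra.ι ℝ w)
          = ExteriorAlgebra.ι ℝ v * ExteriorAlgebra.ι ℝ w ∧
      graf Q (ExteriorAlgebra.ι ℝ v) (ExteriorAlgebra.ι ℝ w)
          = - graf Q (ExteriorAlgebra.ι ℝ w) (ExteriorAlgebra.ι ℝ v) := by
  have key : ∀ u : V, CliffordAlgebra.equivExterior Q (CliffordAlgebra.ι Q u)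
      = ExteriorAlgebra.ι ℝ u := fun u => CliffordAlgebra.changeForm_ι CliffordAlgebra.changeForm.associated_neg_proof u
  have main : ∀ v w : V, QuadraticMap.polar Q v w = 0 →
      graf Q (ExteriorAlgebra.ι ℝ v) (ExteriorAlgebra.ι ℝ w)
        = ExteriorAlgebra.ι ℝ v * ExteriorAlgebra.ι ℝ w := by
    intro v w hvw
    unfold graf
    rw [← key v, ← key w, LinearEquiv.symm_apply_apply, LinearEquiv.symm_apply_apply]
    show CliffordAlgebra.changeForm CliffordAlgebra.changeForm.associated_neg_proof _ = _
    rw [CliffordAlgebra.changeForm_ι_mul_ι]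
    have hB : (QuadraticMap.associated (R := ℝ) (-Q)) v w = 0 := by
      rw [QuadraticMap.associated_apply]
      have : (-Q) (v + w) - (-Q) v - (-Q) w = 0 := by
        have := hvw
        simp only [QuadraticMap.polar] at this
        simp only [QuadraticMap.neg_apply]
        linarith
      rw [this, smul_zero]
    rw [hB, map_zero, sub_zero, key v, key w]
  intro v w hvw
  have hwv : QuadraticMap.polar Q w v = 0 := by
    rwa [QuadraticMap.polar_comm]
  refine ⟨main v w hvw, ?_⟩
  rw [main v w hvw, main w v hwv]
  have := CliffordAlgebra.ι_mul_ι_add_swap (Q := (0 : QuadraticForm ℝ V)) v w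
  simp only [QuadraticMap.polar, QuadraticMap.zero_apply, sub_zero, sub_self, map_zero] at this
  show ExteriorAlgebra.ι ℝ v * ExteriorAlgebra.ι ℝ w
      = - (ExteriorAlgebra.ι ℝ w * ExteriorAlgebra.ι ℝ v)
  exact eq_neg_of_add_eq_zero_left this
end

section
/- Let I = (i₁ < i₂ < … < i_r) and J = (j₁ < j₂ < … < j_s) be strictly increasing lists of indices in Fin n whose underlying sets are disjoint, and set e^I := ι(e i₁) ∧ ι(e i₂) ∧ … ∧ ι(e i_r) and e^J := ι(e j₁) ∧ … ∧ ι(e j_s) in Λ(V). Then the Graf product coincides with the exterior product: e^I ⋄ e^J = e^I ∧ e^J. -/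
open CliffordAlgebra ExteriorAlgebra

lemma contractLeft_listProd_eq_zero {V : Type*} [AddCommGroup V] [Module ℝ V]
    (d : Module.Dual ℝ V) (L : List V) (hd : ∀ v ∈ L, d v = 0) :
    CliffordAlgebra.contractLeft (Q := (0 : QuadraticForm ℝ V)) d
      ((L.map fun v => CliffordAlgebra.ι (0 : QuadraticForm ℝ V) v).prod) = 0 := by
  induction L with
  | nil => simpa using CliffordAlgebra.contractLeft_one (0 : QuadraticForm ℝ V) d
  | cons a L ih =>
    simp only [List.map_cons, List.prod_cons]
    rw [CliffordAlgebra.contractLeft_ι_mul, ih (fun v hv => hd v (List.mem_cons_of_mem _ hv)),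
      hd a List.mem_cons_self]
    simp

lemma equivExterior_listProd {V : Type*} [AddCommGroup V] [Module ℝ V]
    (Q : QuadraticForm ℝ V) (L : List V)
    (horth : L.Pairwise fun u v => QuadraticMap.polar Q u v = 0) :
    CliffordAlgebra.equivExterior Q ((L.map fun v => CliffordAlgebra.ι Q v).prod)
      = (L.map fun v => ExteriorAlgebra.ι ℝ v).prod := by
  induction L with
  | nil =>
    simp only [List.map_nil, List.prod_nil]
    exact CliffordAlgebra.changeForm_one changeForm.associated_neg_proof
  | cons a L ih =>
    simp only [List.map_cons, List.prod_cons]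
    show CliffordAlgebra.changeForm changeForm.associated_neg_proof
      (CliffordAlgebra.ι Q a * _) = _
    rw [CliffordAlgebra.changeForm_ι_mul]
    have hih := ih horth.tail
    rw [show CliffordAlgebra.changeForm changeForm.associated_neg_proof
        ((L.map fun v => CliffordAlgebra.ι Q v).prod) =
        CliffordAlgebra.equivExterior Q ((L.map fun v => CliffordAlgebra.ι Q v).prod) from rfl,
      hih]
    have hz : CliffordAlgebra.contractLeft (Q := (0 : QuadraticForm ℝ V))
        (QuadraticMap.associated (R := ℝ) (-Q) a)
        ((L.map fun v => ExteriorAlgebra.ι ℝ v).prod) = 0 := by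
      apply contractLeft_listProd_eq_zero
      intro v hv
      have h1 : QuadraticMap.polar Q a v = 0 :=
        (List.pairwise_cons.mp horth).1 v hv
      have : QuadraticMap.polar (⇑(-Q)) a v = 0 := by
        simp [QuadraticMap.polar, h1]
        have := h1
        simp [QuadraticMap.polar] at this
        linarith
      rw [QuadraticMap.associated_apply]
      simp [QuadraticMap.polar] at this ⊢
      linarith
    rw [hz, sub_zero]

/-- on basis blades with disjoint index sets, the Graf product coincides
with the exterior product. -/
theorem graf_eq_wedge_of_disjoint_blades
    (p q n : ℕ) (hn : n = p + q)
    {V : Type*} [AddCommGroup V] [Module ℝ V]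
    (Q : QuadraticForm ℝ V) (e : Module.Basis (Fin n) ℝ V)
    (horth : ∀ i j : Fin n, i ≠ j → QuadraticMap.polar Q (e i) (e j) = 0)
    (hQpos : ∀ i : Fin n, (i : ℕ) < p → Q (e i) = 1)
    (hQneg : ∀ i : Fin n, p ≤ (i : ℕ) → Q (e i) = -1)
    (I J : List (Fin n)) (hI : I.Pairwise (· < ·)) (hJ : J.Pairwise (· < ·))
    (hdisj : ∀ i ∈ I, i ∉ J) :
    graf Q ((I.map fun i => ExteriorAlgebra.ι ℝ (e i)).prod)
        ((J.map fun j => ExteriorAlgebra.ι ℝ (e j)).prod)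
      = (I.map fun i => ExteriorAlgebra.ι ℝ (e i)).prod *
        (J.map fun j => ExteriorAlgebra.ι ℝ (e j)).prod := by
  have hnodup : (I ++ J).Pairwise (· ≠ ·) := by
    rw [List.pairwise_append]
    exact ⟨hI.imp ne_of_lt, hJ.imp ne_of_lt, fun a ha b hb hab => hdisj a ha (hab ▸ hb)⟩
  have key : ∀ (L : List (Fin n)), L.Pairwise (· ≠ ·) →
      CliffordAlgebra.equivExterior Q ((L.map fun i => CliffordAlgebra.ι Q (e i)).prod)
        = (L.map fun i => ExteriorAlgebra.ι ℝ (e i)).prod := by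
    intro L hL
    have hL' : (L.map fun i => e i).Pairwise
        (fun u v => QuadraticMap.polar Q u v = 0) := by
      rw [List.pairwise_map]
      exact hL.imp fun h => horth _ _ h
    simpa [List.map_map, Function.comp_def] using equivExterior_listProd Q (L.map fun i => e i) hL'
  have hIp : I.Pairwise (· ≠ ·) := (List.pairwise_append.mp hnodup).1
  have hJp : J.Pairwise (· ≠ ·) := (List.pairwise_append.mp hnodup).2.1
  unfold graf
  rw [← key I hIp, ← key J hJp, LinearEquiv.symm_apply_apply, LinearEquiv.symm_apply_apply,
    ← List.prod_append, ← List.map_append, key (I ++ J) hnodup, List.map_append,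
    List.prod_append, key I hIp, key J hJp]
end

section
/- The Hodge operator is well defined on graded components: for every r ≤ n and every f lying in the r-th exterior power Λ^r(V) (the degree-r graded component of Λ(V)), the element ⋆f := f ⋄ v lies in the (n - r)-th exterior power Λ^{n-r}(V). -/
open CliffordAlgebra ExteriorAlgebra

section Aux

variable {V : Type*} [AddCommGroup V] [Module ℝ V] {n : ℕ}
  (Q : QuadraticForm ℝ V) (e : Module.Basis (Fin n) ℝ V)

/-- product of Clifford images of basis vectors over a list of indices -/
noncomputable def Pc (l : List (Fin n)) : CliffordAlgebra Q :=
  (l.map fun i => CliffordAlgebra.ι Q (e i)).prod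

lemma Pc_nil : Pc Q e [] = 1 := rfl

lemma Pc_cons (a : Fin n) (l : List (Fin n)) :
    Pc Q e (a :: l) = CliffordAlgebra.ι Q (e a) * Pc Q e l := by
  simp [Pc]

lemma Pc_append (l m : List (Fin n)) : Pc Q e (l ++ m) = Pc Q e l * Pc Q e m := by
  simp [Pc]

lemma contract_Pc_zero (d : Module.Dual ℝ V) :
    ∀ (l : List (Fin n)), (∀ j ∈ l, d (e j) = 0) →
      contractLeft (Q := (0 : QuadraticForm ℝ V)) d (Pc (0 : QuadraticForm ℝ V) e l) = 0 := by
  intro l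
  induction l with
  | nil =>
    intro _
    rw [Pc_nil, ← map_one (algebraMap ℝ (CliffordAlgebra (0 : QuadraticForm ℝ V))),
      contractLeft_algebraMap]
  | cons a l ih =>
    intro h
    rw [Pc_cons, contractLeft_ι_mul, h a (List.mem_cons_self (a := a) (l := l)),
      ih fun j hj => h j (List.mem_cons_of_mem a hj), zero_smul, mul_zero, sub_zero]

lemma assoc_neg_eq_zero (horth : ∀ i j : Fin n, i ≠ j → QuadraticMap.polar Q (e i) (e j) = 0)
    {i j : Fin n} (hij : i ≠ j) :
    QuadraticMap.associated (R := ℝ) (-Q) (e i) (e j) = 0 := by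
  have h2 := QuadraticMap.two_nsmul_associated ℝ (-Q)
  have h3 : (2 • QuadraticMap.associatedHom ℝ (-Q)) (e i) (e j)
      = QuadraticMap.polarBilin (-Q) (e i) (e j) := by rw [h2]
  simp only [LinearMap.smul_apply, QuadraticMap.polarBilin_apply_apply,
    QuadraticMap.coeFn_neg, QuadraticMap.polar_neg, horth i j hij, neg_zero] at h3
  have : (2 : ℕ) • (QuadraticMap.associated (R := ℝ) (-Q) (e i) (e j)) = 0 := h3
  rw [smul_eq_zero] at this
  rcases this with h | h
  · exact absurd h (by norm_num)
  · exact h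

lemma equivExterior_Pc (horth : ∀ i j : Fin n, i ≠ j → QuadraticMap.polar Q (e i) (e j) = 0) :
    ∀ (l : List (Fin n)), l.Nodup →
      equivExterior Q (Pc Q e l) = Pc (0 : QuadraticForm ℝ V) e l := by
  intro l
  induction l with
  | nil =>
    intro _
    rw [Pc_nil, Pc_nil]
    show changeForm changeForm.associated_neg_proof (1 : CliffordAlgebra Q) = 1
    exact changeForm_one _
  | cons a l ih =>
    intro hnd
    rw [Pc_cons, Pc_cons]
    show changeForm changeForm.associated_neg_proof (CliffordAlgebra.ι Q (e a) * Pc Q e l) = _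
    rw [changeForm_ι_mul]
    have hl : equivExterior Q (Pc Q e l) = Pc (0 : QuadraticForm ℝ V) e l :=
      ih (List.Nodup.of_cons hnd)
    have hl' : changeForm changeForm.associated_neg_proof (Pc Q e l)
        = Pc (0 : QuadraticForm ℝ V) e l := hl
    rw [hl']
    rw [contract_Pc_zero e _ l fun j hj =>
      assoc_neg_eq_zero Q e horth (List.rel_of_pairwise_cons hnd hj), sub_zero]

lemma Pc_perm (horth : ∀ i j : Fin n, i ≠ j → QuadraticMap.polar Q (e i) (e j) = 0)
    {l l' : List (Fin n)} (h : l.Perm l') : ∃ r : ℝ, Pc Q e l = r • Pc Q e l' := by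
  induction h with
  | nil => exact ⟨1, (one_smul _ _).symm⟩
  | cons a _ ih =>
    obtain ⟨r, hr⟩ := ih
    exact ⟨r, by rw [Pc_cons, Pc_cons, hr, mul_smul_comm]⟩
  | swap x y l =>
    by_cases hxy : x = y
    · subst hxy
      exact ⟨1, (one_smul _ _).symm⟩
    · refine ⟨-1, ?_⟩
      have hanti : CliffordAlgebra.ι Q (e y) * CliffordAlgebra.ι Q (e x)
          = -(CliffordAlgebra.ι Q (e x) * CliffordAlgebra.ι Q (e y)) := by
        have h1 := CliffordAlgebra.ι_mul_ι_add_swap (Q := Q) (e y) (e x)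
        rw [horth y x (Ne.symm hxy), map_zero] at h1
        exact eq_neg_of_add_eq_zero_left h1
      rw [Pc_cons, Pc_cons, Pc_cons, Pc_cons, ← mul_assoc, ← mul_assoc, hanti]
      simp
  | trans _ _ ih1 ih2 =>
    obtain ⟨r1, hr1⟩ := ih1
    obtain ⟨r2, hr2⟩ := ih2
    exact ⟨r1 * r2, by rw [hr1, hr2, smul_smul]⟩

lemma Pc_sq (l m : List (Fin n)) :
    Pc Q e ((l.flatMap fun i => [i, i]) ++ m) = ((l.map fun i => Q (e i)).prod) • Pc Q e m := by
  induction l with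
  | nil => simp
  | cons a l ih =>
    rw [List.flatMap_cons, List.append_assoc]
    show Pc Q e (a :: a :: ((l.flatMap fun i => [i, i]) ++ m)) = _
    rw [Pc_cons, Pc_cons, ih, ← mul_assoc, CliffordAlgebra.ι_sq_scalar, ← Algebra.smul_def,
      smul_smul, List.map_cons, List.prod_cons]

lemma double_perm (l : List (Fin n)) : (l ++ l).Perm (l.flatMap fun i => [i, i]) := by
  induction l with
  | nil => simp
  | cons a l ih =>
    rw [List.flatMap_cons]
    show (a :: (l ++ a :: l)).Perm (a :: a :: (l.flatMap fun i => [i, i]))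
    exact (List.perm_middle.trans (ih.cons a)).cons a

end Aux
section Aux2

variable {V : Type*} [AddCommGroup V] [Module ℝ V] {n : ℕ}
  (Q : QuadraticForm ℝ V) (e : Module.Basis (Fin n) ℝ V)

lemma Pc_mul_vol (horth : ∀ i j : Fin n, i ≠ j → QuadraticMap.polar Q (e i) (e j) = 0)
    (l : List (Fin n)) (hl : l.Nodup) :
    ∃ (r : ℝ) (l' : List (Fin n)), l'.Nodup ∧ l'.length = n - l.length ∧
      Pc Q e l * Pc Q e (List.finRange n) = r • Pc Q e l' := by
  classical
  set l' := (List.finRange n).filter (fun j => !decide (j ∈ l)) with hl'def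
  have hnd' : l'.Nodup := (List.nodup_finRange n).filter _
  have hperm1 : ((List.finRange n).filter (fun j => decide (j ∈ l))).Perm l := by
    rw [List.perm_ext_iff_of_nodup ((List.nodup_finRange n).filter _) hl]
    intro a
    simp [List.mem_filter]
  have hsplit : ((List.finRange n).filter (fun j => decide (j ∈ l)) ++ l').Perm
      (List.finRange n) := List.filter_append_perm _ _
  have hlen : l'.length = n - l.length := by
    have h1 := hsplit.length_eq
    rw [List.length_append, hperm1.length_eq, List.length_finRange] at h1
    omega
  have hperm : (l ++ List.finRange n).Perm ((l.flatMap fun i => [i, i]) ++ l') := by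
    refine List.Perm.trans ((hsplit.symm).append_left l) ?_
    rw [← List.append_assoc]
    exact ((hperm1.append_left l).append_right l').trans ((double_perm l).append_right l')
  obtain ⟨r, hr⟩ := Pc_perm Q e horth hperm
  refine ⟨r * ((l.map fun i => Q (e i)).prod), l', hnd', hlen, ?_⟩
  rw [← Pc_append, hr, Pc_sq, smul_smul]

end Aux2
section Aux3

variable {V : Type*} [AddCommGroup V] [Module ℝ V] {n : ℕ} (e : Module.Basis (Fin n) ℝ V)

lemma Pc_zero_mem (l : List (Fin n)) :
    Pc (0 : QuadraticForm ℝ V) e l ∈ ⋀[ℝ]^(l.length) V := by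
  induction l with
  | nil =>
    rw [Pc_nil]
    exact SetLike.one_mem_graded _
  | cons a l ih =>
    rw [Pc_cons, List.length_cons]
    have h1 : (ExteriorAlgebra.ι ℝ (e a) : ExteriorAlgebra ℝ V) ∈ ⋀[ℝ]^1 V := by
      have hp : ⋀[ℝ]^1 V = LinearMap.range (ExteriorAlgebra.ι ℝ : V →ₗ[ℝ] ExteriorAlgebra ℝ V) :=
        pow_one _
      rw [hp]; exact LinearMap.mem_range_self _ _
    have h2 := SetLike.mul_mem_graded h1 ih
    rwa [Nat.add_comm 1 l.length] at h2

end Aux3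

section Aux4

variable {V : Type*} [AddCommGroup V] [Module ℝ V] {n : ℕ}
  (Q : QuadraticForm ℝ V) (e : Module.Basis (Fin n) ℝ V)

/-- The Hodge operator bundled as a linear map. -/
noncomputable def hodgeAux : ExteriorAlgebra ℝ V →ₗ[ℝ] ExteriorAlgebra ℝ V :=
  (CliffordAlgebra.equivExterior Q).toLinearMap ∘ₗ
    (LinearMap.mulRight ℝ (((List.finRange n).map fun i => CliffordAlgebra.ι Q (e i)).prod)) ∘ₗ
    (CliffordAlgebra.equivExterior Q).symm.toLinearMap

lemma hodgeAux_apply (x : ExteriorAlgebra ℝ V) :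
    hodgeAux Q e x = CliffordAlgebra.equivExterior Q ((CliffordAlgebra.equivExterior Q).symm x *
      ((List.finRange n).map fun i => CliffordAlgebra.ι Q (e i)).prod) := rfl

lemma hodgeAux_mem (horth : ∀ i j : Fin n, i ≠ j → QuadraticMap.polar Q (e i) (e j) = 0)
    (r : ℕ) (f : ExteriorAlgebra ℝ V) (hf : f ∈ ⋀[ℝ]^r V) :
    hodgeAux Q e f ∈ ⋀[ℝ]^(n - r) V := by
  rw [← ιMulti_span_fixedDegree] at hf
  induction hf using Submodule.span_induction with
  | mem x hx =>
    obtain ⟨v, rfl⟩ := hx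
    have hexp : ιMulti ℝ r v = ∑ g : Fin r → Fin n,
        (∏ i, e.repr (v i) (g i)) • ιMulti ℝ r (fun i => e (g i)) := by
      have h0 : v = fun i => ∑ j, e.repr (v i) j • e j :=
        funext fun i => (e.sum_repr (v i)).symm
      calc ιMulti ℝ r v
          = (ιMulti ℝ r (M := V)).toMultilinearMap (fun i => ∑ j, e.repr (v i) j • e j) := by
            rw [← h0]; rfl
        _ = ∑ g : Fin r → Fin n, (ιMulti ℝ r (M := V)).toMultilinearMap
              (fun i => e.repr (v i) (g i) • e (g i)) := MultilinearMap.map_sum _ _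
        _ = ∑ g : Fin r → Fin n, (∏ i, e.repr (v i) (g i)) • ιMulti ℝ r (fun i => e (g i)) :=
            Finset.sum_congr rfl fun g _ => MultilinearMap.map_smul_univ _ _ _
    rw [hexp, map_sum]
    apply Submodule.sum_mem
    intro g _
    rw [map_smul]
    apply Submodule.smul_mem
    by_cases hg : Function.Injective g
    · have hnd : (List.ofFn g).Nodup := List.nodup_ofFn.mpr hg
      have hEe : ιMulti ℝ r (fun i => e (g i)) = Pc (0 : QuadraticForm ℝ V) e (List.ofFn g) := by
        rw [ιMulti_apply]
        simp [Pc, List.map_ofFn, Function.comp_def]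
      obtain ⟨s, l', hnd', hlen, hmul⟩ := Pc_mul_vol Q e horth (List.ofFn g) hnd
      have hsymm : (CliffordAlgebra.equivExterior Q).symm
          (Pc (0 : QuadraticForm ℝ V) e (List.ofFn g)) = Pc Q e (List.ofFn g) := by
        rw [LinearEquiv.symm_apply_eq]
        exact (equivExterior_Pc Q e horth _ hnd).symm
      have hval : hodgeAux Q e (ιMulti ℝ r (fun i => e (g i)))
          = s • Pc (0 : QuadraticForm ℝ V) e l' := by
        rw [hEe, hodgeAux_apply, hsymm]
        have : Pc Q e (List.ofFn g) *
            ((List.finRange n).map fun i => CliffordAlgebra.ι Q (e i)).prod = s • Pc Q e l' :=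
          hmul
        rw [this, map_smul, equivExterior_Pc Q e horth l' hnd']
      rw [hval]
      apply Submodule.smul_mem
      have hm := Pc_zero_mem e l'
      rwa [hlen, List.length_ofFn] at hm
    · obtain ⟨i, j, hgij, hij⟩ := Function.not_injective_iff.mp hg
      have hz : ιMulti ℝ r (fun i => e (g i)) = 0 :=
        AlternatingMap.map_eq_zero_of_eq _ _ (by rw [hgij]) hij
      rw [hz, map_zero]
      exact Submodule.zero_mem _
  | zero => rw [map_zero]; exact Submodule.zero_mem _
  | add x y hx hy ihx ihy => rw [map_add]; exact Submodule.add_mem _ ihx ihy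
  | smul c x hx ih => rw [map_smul]; exact Submodule.smul_mem _ _ ih

end Aux4

/-- the Hodge operator maps the r-th exterior power into the (n-r)-th. -/
theorem hodge_mem_exteriorPower
    (p q n : ℕ) (hn : n = p + q)
    {V : Type*} [AddCommGroup V] [Module ℝ V]
    (Q : QuadraticForm ℝ V) (e : Module.Basis (Fin n) ℝ V)
    (horth : ∀ i j : Fin n, i ≠ j → QuadraticMap.polar Q (e i) (e j) = 0)
    (hQpos : ∀ i : Fin n, (i : ℕ) < p → Q (e i) = 1)
    (hQneg : ∀ i : Fin n, p ≤ (i : ℕ) → Q (e i) = -1) :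
    ∀ r : ℕ, r ≤ n → ∀ f ∈ ⋀[ℝ]^r V, hodge Q e f ∈ ⋀[ℝ]^(n - r) V := by
  intro r _hr f hf
  have heq : hodge Q e f = hodgeAux Q e f := by
    simp only [hodge, graf, volForm, cliffVol, hodgeAux_apply, LinearEquiv.symm_apply_apply]
  rw [heq]
  exact hodgeAux_mem Q e horth r f hf
end

section
/- Suppose (p - q : ℤ) % 8 ∈ {0, 1, 4, 5}. Then the elements p₊ := (1/2) • (1 + ω) and p₋ := (1/2) • (1 - ω) of CliffordAlgebra Q are orthogonal idempotents summing to one: p₊ + p₋ = 1, p₊ * p₊ = p₊, p₋ * p₋ = p₋, and p₊ * p₋ = 0 = p₋ * p₊. -/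
open CliffordAlgebra ExteriorAlgebra

section Aux
variable {V : Type*} [AddCommGroup V] [Module ℝ V] {n : ℕ}
  (Q : QuadraticForm ℝ V) (e : Module.Basis (Fin n) ℝ V)
  (horth : ∀ i j : Fin n, i ≠ j → QuadraticMap.polar Q (e i) (e j) = 0)

include horth in
lemma my_swap (a : Fin n) (l : List (Fin n)) (h : a ∉ l) :
    (l.map fun i => ι Q (e i)).prod * ι Q (e a)
      = (-1 : ℝ)^l.length • (ι Q (e a) * (l.map fun i => ι Q (e i)).prod) := by
  induction l with
  | nil => simp
  | cons b t ih =>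
    simp only [List.mem_cons, not_or] at h
    have hba : ι Q (e b) * ι Q (e a) = - (ι Q (e a) * ι Q (e b)) := by
      have := ι_mul_ι_add_swap (Q := Q) (e b) (e a)
      rw [horth b a (fun hh => h.1 (by rw [hh]))] at this
      simp at this
      linear_combination (norm := noncomm_ring) this
    simp only [List.map_cons, List.prod_cons, List.length_cons]
    rw [mul_assoc, ih h.2, mul_smul_comm, ← mul_assoc, hba, pow_succ]
    simp [mul_smul, mul_assoc]

include horth in
lemma my_sq (l : List (Fin n)) (h : l.Nodup) :
    (l.map fun i => ι Q (e i)).prod * (l.map fun i => ι Q (e i)).prod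
      = ((-1 : ℝ)^(∑ i ∈ Finset.range l.length, i) * (l.map fun i => Q (e i)).prod)
          • 1 := by
  induction l with
  | nil => simp
  | cons a t ih =>
    rw [List.nodup_cons] at h
    simp only [List.map_cons, List.prod_cons, List.length_cons]
    have hsw := my_swap Q e horth a t h.1
    set P := (List.map (fun i => (ι Q) (e i)) t).prod with hP
    rw [mul_assoc, ← mul_assoc P, hsw, smul_mul_assoc, mul_smul_comm,
      mul_assoc, ← mul_assoc (ι Q (e a)) (ι Q (e a)), ι_sq_scalar,
      Algebra.algebraMap_eq_smul_one, smul_mul_assoc, one_mul, smul_smul,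
      ih h.2, smul_smul, Finset.sum_range_succ, pow_add]
    congr 1
    ring

end Aux

lemma my_tri_par (k r : ℕ) (hr : r < 4) :
    (∑ i ∈ Finset.range (4*k+r), i) % 2 = (r*(r-1)/2) % 2 := by
  induction k with
  | zero => interval_cases r <;> decide
  | succ m ih =>
    have h1 : 4*(m+1)+r = (4*m+r)+1+1+1+1 := by ring
    rw [h1, Finset.sum_range_succ, Finset.sum_range_succ, Finset.sum_range_succ,
      Finset.sum_range_succ]
    omega


/-- for signatures with p - q ≡ 0,1,4,5 (mod 8), p₊ and p₋ are
orthogonal idempotents summing to one. -/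
theorem idempotents_mod_eight_pos
    (p q n : ℕ) (hn : n = p + q)
    {V : Type*} [AddCommGroup V] [Module ℝ V]
    (Q : QuadraticForm ℝ V) (e : Module.Basis (Fin n) ℝ V)
    (horth : ∀ i j : Fin n, i ≠ j → QuadraticMap.polar Q (e i) (e j) = 0)
    (hQpos : ∀ i : Fin n, (i : ℕ) < p → Q (e i) = 1)
    (hQneg : ∀ i : Fin n, p ≤ (i : ℕ) → Q (e i) = -1)
    (hsig : ((p : ℤ) - q) % 8 ∈ ({0, 1, 4, 5} : Set ℤ)) :
    ((1/2 : ℝ) • (1 + cliffVol Q e) + (1/2 : ℝ) • (1 - cliffVol Q e)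
        = (1 : CliffordAlgebra Q)) ∧
    ((1/2 : ℝ) • (1 + cliffVol Q e) * ((1/2 : ℝ) • (1 + cliffVol Q e))
        = (1/2 : ℝ) • (1 + cliffVol Q e)) ∧
    ((1/2 : ℝ) • (1 - cliffVol Q e) * ((1/2 : ℝ) • (1 - cliffVol Q e))
        = (1/2 : ℝ) • (1 - cliffVol Q e)) ∧
    ((1/2 : ℝ) • (1 + cliffVol Q e) * ((1/2 : ℝ) • (1 - cliffVol Q e)) = 0) ∧
    ((1/2 : ℝ) • (1 - cliffVol Q e) * ((1/2 : ℝ) • (1 + cliffVol Q e)) = 0) := by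
  have hω : cliffVol Q e * cliffVol Q e = 1 := by
    rw [cliffVol, my_sq Q e horth _ (List.nodup_finRange n), List.length_finRange]
    have hprodQ : ((List.finRange n).map fun i => Q (e i)).prod = (-1:ℝ)^q := by
      rw [← Fin.prod_univ_def]
      have hQ : ∀ i : Fin n, Q (e i) = if (i:ℕ) < p then (1:ℝ) else -1 := by
        intro i
        split
        · exact hQpos i ‹_›
        · exact hQneg i (le_of_not_gt ‹_›)
      rw [Finset.prod_congr rfl fun i _ => hQ i, Finset.prod_ite,
        Finset.prod_const, Finset.prod_const, one_pow, one_mul]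
      congr 1
      rcases Nat.eq_zero_or_pos q with hq | hq
      · rw [Finset.filter_eq_empty_iff.2 (by intro i _; have := i.isLt; simp; omega)]
        simp [hq]
      · have hp : p < n := by omega
        have hset : (Finset.univ.filter fun i : Fin n => ¬ (i:ℕ) < p)
            = Finset.Ici (⟨p, hp⟩ : Fin n) := by
          ext i
          simp [Fin.le_def]
        rw [hset, Fin.card_Ici]
        simp only [Fin.val_mk]
        omega
    rw [hprodQ]
    have heven : ((∑ i ∈ Finset.range n, i) + q) % 2 = 0 := by
      have h8 : ((p : ℤ) - q) % 8 = 0 ∨ ((p : ℤ) - q) % 8 = 1 ∨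
          ((p : ℤ) - q) % 8 = 4 ∨ ((p : ℤ) - q) % 8 = 5 := by
        simpa [Set.mem_insert_iff] using hsig
      have htri := my_tri_par (n/4) (n%4) (by omega)
      rw [Nat.div_add_mod] at htri
      have h4 : n % 4 = 0 ∨ n % 4 = 1 ∨ n % 4 = 2 ∨ n % 4 = 3 := by omega
      rcases h4 with h|h|h|h <;> rw [h] at htri <;> norm_num at htri <;> omega
    rw [← pow_add, Even.neg_one_pow (Nat.even_iff.mpr heven), one_smul]
  refine ⟨?_, ?_, ?_, ?_, ?_⟩
  · rw [← smul_add]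
    have h2 : (1 + cliffVol Q e) + (1 - cliffVol Q e) = (2:ℝ) • 1 := by
      rw [two_smul]; abel
    rw [h2, smul_smul]; norm_num
  · rw [smul_mul_smul_comm]
    have h2 : (1 + cliffVol Q e) * (1 + cliffVol Q e)
        = (2:ℝ) • (1 + cliffVol Q e) := by
      simp only [two_smul, mul_add, add_mul, one_mul, mul_one, hω]; abel
    rw [h2, smul_smul]; norm_num
  · rw [smul_mul_smul_comm]
    have h2 : (1 - cliffVol Q e) * (1 - cliffVol Q e)
        = (2:ℝ) • (1 - cliffVol Q e) := by
      simp only [two_smul, mul_sub, sub_mul, one_mul, mul_one, hω]; abel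
    rw [h2, smul_smul]; norm_num
  · rw [smul_mul_smul_comm]
    have h2 : (1 + cliffVol Q e) * (1 - cliffVol Q e) = 0 := by
      simp only [mul_sub, add_mul, one_mul, mul_one, hω]; abel
    rw [h2, smul_zero]
  · rw [smul_mul_smul_comm]
    have h2 : (1 - cliffVol Q e) * (1 + cliffVol Q e) = 0 := by
      simp only [mul_add, sub_mul, one_mul, mul_one, hω]; abel
    rw [h2, smul_zero]
end

section
/- Suppose (p - q : ℤ) % 8 ∈ {2, 3, 6, 7}. Then the elements p₊ := (1/2) • (1 + ω) and p₋ := (1/2) • (1 - ω) of CliffordAlgebra Q satisfy p₊ * p₊ = (1/2) • ω, p₋ * p₋ = -(1/2) • ω, and p₊ * p₋ = (1/2) • 1 = p₋ * p₊. -/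
open CliffordAlgebra ExteriorAlgebra

section AuxNeg
variable {V : Type*} [AddCommGroup V] [Module ℝ V] (Q : QuadraticForm ℝ V)

lemma aux_mul_iota_comm (v : V) (t : List V)
    (h : ∀ w ∈ t, QuadraticMap.polar Q v w = 0) :
    (t.map (ι Q)).prod * ι Q v = ((-1 : ℝ)^t.length) • (ι Q v * (t.map (ι Q)).prod) := by
  induction t with
  | nil => simp
  | cons w t ih =>
    have hvw : ι Q v * ι Q w = -(ι Q w * ι Q v) := by
      have := CliffordAlgebra.ι_mul_ι_add_swap (Q := Q) v w
      rw [h w List.mem_cons_self] at this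
      simp at this
      rw [eq_neg_iff_add_eq_zero]
      exact this
    have ih' := ih (fun w hw => h w (List.mem_cons_of_mem _ hw))
    simp only [List.map_cons, List.prod_cons, List.length_cons, mul_assoc, ih',
      mul_smul_comm, pow_succ]
    rw [mul_comm ((-1:ℝ)^t.length) (-1), ← smul_smul, neg_one_smul]
    rw [← smul_neg, ← mul_assoc (ι Q v), ← neg_mul, hvw, neg_neg, mul_assoc]

lemma aux_prod_sq (l : List V) (h : l.Pairwise fun a b => QuadraticMap.polar Q a b = 0) :
    (l.map (ι Q)).prod * (l.map (ι Q)).prod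
      = algebraMap ℝ _ ((-1 : ℝ)^(l.length.choose 2) * (l.map Q).prod) := by
  induction l with
  | nil => simp
  | cons v t ih =>
    obtain ⟨hv, ht⟩ := List.pairwise_cons.mp h
    have swap := aux_mul_iota_comm Q v t hv
    simp only [List.map_cons, List.prod_cons]
    calc ι Q v * (t.map (ι Q)).prod * (ι Q v * (t.map (ι Q)).prod)
        = ι Q v * ((t.map (ι Q)).prod * ι Q v) * (t.map (ι Q)).prod := by
          noncomm_ring
      _ = ((-1:ℝ)^t.length) • (ι Q v * ι Q v * ((t.map (ι Q)).prod * (t.map (ι Q)).prod)) := by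
          rw [swap]; simp only [mul_smul_comm, smul_mul_assoc, mul_assoc]
      _ = ((-1:ℝ)^t.length) • (algebraMap ℝ _ (Q v) *
            algebraMap ℝ _ ((-1:ℝ)^(t.length.choose 2) * (t.map Q).prod)) := by
          rw [← CliffordAlgebra.ι_sq_scalar, ih ht, mul_assoc]
      _ = algebraMap ℝ _ ((-1:ℝ)^((t.length+1).choose 2) * ((v :: t).map Q).prod) := by
          rw [← map_mul, Algebra.smul_def, ← map_mul]
          congr 1
          have hc : (t.length+1).choose 2 = t.length.choose 2 + t.length := by
            rw [Nat.choose_succ_succ]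
            simp [Nat.choose_one_right, Nat.add_comm]
          rw [hc, pow_add]
          simp
          ring

lemma aux_choose_step (m : ℕ) : (m+1).choose 2 = m.choose 2 + m := by
  simp [Nat.choose_succ_succ, Nat.choose_one_right, Nat.add_comm]

lemma aux_choose4 (n : ℕ) : n.choose 2 % 2 = (n % 4).choose 2 % 2 := by
  induction n using Nat.strong_induction_on with
  | _ n ih =>
    by_cases h : n < 4
    · rw [Nat.mod_eq_of_lt h]
    · obtain ⟨m, rfl⟩ : ∃ m, n = m + 4 := ⟨n - 4, by omega⟩
      have e1 : (m+4).choose 2 = (m+3).choose 2 + (m+3) := aux_choose_step (m+3)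
      have e2 : (m+3).choose 2 = (m+2).choose 2 + (m+2) := aux_choose_step (m+2)
      have e3 : (m+2).choose 2 = (m+1).choose 2 + (m+1) := aux_choose_step (m+1)
      have e4 : (m+1).choose 2 = m.choose 2 + m := aux_choose_step m
      have h2 : (m+4).choose 2 % 2 = m.choose 2 % 2 := by omega
      have h3 : (m+4) % 4 = m % 4 := by omega
      rw [h2, ih m (by omega), h3]

lemma aux_vol_sq_neg_one
    (p q n : ℕ) (hn : n = p + q)
    (e : Module.Basis (Fin n) ℝ V)
    (horth : ∀ i j : Fin n, i ≠ j → QuadraticMap.polar Q (e i) (e j) = 0)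
    (hQpos : ∀ i : Fin n, (i : ℕ) < p → Q (e i) = 1)
    (hQneg : ∀ i : Fin n, p ≤ (i : ℕ) → Q (e i) = -1)
    (hsig : ((p : ℤ) - q) % 8 ∈ ({2, 3, 6, 7} : Set ℤ)) :
    cliffVol Q e * cliffVol Q e = -1 := by
  set l : List V := (List.finRange n).map e with hl
  have hcv : cliffVol Q e = (l.map (ι Q)).prod := by
    rw [hl, List.map_map]; rfl
  have hpw : l.Pairwise fun a b => QuadraticMap.polar Q a b = 0 := by
    refine List.Pairwise.map e (fun i j hij => horth i j hij) ?_
    exact (List.nodup_finRange n)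
  have hlen : l.length = n := by simp [hl]
  have hprodQ : (l.map Q).prod = (-1 : ℝ)^q := by
    rw [hl, List.map_map, ← Fin.prod_univ_def]
    subst hn
    rw [Fin.prod_univ_add]
    have h1 : ∀ i : Fin p, Q (e (Fin.castAdd q i)) = 1 := fun i =>
      hQpos _ (by simp)
    have h2 : ∀ i : Fin q, Q (e (Fin.natAdd p i)) = -1 := fun i =>
      hQneg _ (by simp)
    simp [h1, h2]
  have hodd : Odd (n.choose 2 + q) := by
    have hc := aux_choose4 n
    simp only [Set.mem_insert_iff, Set.mem_singleton_iff] at hsig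
    rw [Nat.odd_iff]
    have h4 : n % 4 = 0 ∨ n % 4 = 1 ∨ n % 4 = 2 ∨ n % 4 = 3 := by omega
    rcases h4 with h | h | h | h <;>
      rw [h] at hc <;> simp only [Nat.choose] at hc <;> omega
  have hsign : (-1 : ℝ)^(n.choose 2) * (-1 : ℝ)^q = -1 := by
    rw [← pow_add, hodd.neg_one_pow]
  rw [hcv, aux_prod_sq Q l hpw, hlen, hprodQ, hsign]
  simp

end AuxNeg

lemma aux_idem {A : Type*} [Ring A] [Algebra ℝ A] (ω : A) (hω : ω * ω = -1) :
    ((1/2 : ℝ) • (1 + ω) * ((1/2 : ℝ) • (1 + ω)) = (1/2 : ℝ) • ω) ∧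
    ((1/2 : ℝ) • (1 - ω) * ((1/2 : ℝ) • (1 - ω)) = -((1/2 : ℝ) • ω)) ∧
    ((1/2 : ℝ) • (1 + ω) * ((1/2 : ℝ) • (1 - ω)) = (1/2 : ℝ) • (1 : A)) ∧
    ((1/2 : ℝ) • (1 - ω) * ((1/2 : ℝ) • (1 + ω)) = (1/2 : ℝ) • (1 : A)) := by
  have e1 : (1 + ω) * (1 + ω) = ω + ω := by
    rw [mul_add, add_mul, add_mul, one_mul, mul_one, hω]; noncomm_ring
  have e2 : (1 - ω) * (1 - ω) = -(ω + ω) := by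
    rw [mul_sub, sub_mul, sub_mul, one_mul, mul_one, hω]; noncomm_ring
  have e3 : (1 + ω) * (1 - ω) = 1 + 1 := by
    rw [mul_sub, add_mul, add_mul, one_mul, mul_one, hω]; noncomm_ring
  have e4 : (1 - ω) * (1 + ω) = 1 + 1 := by
    rw [mul_add, sub_mul, sub_mul, one_mul, mul_one, hω]; noncomm_ring
  refine ⟨?_, ?_, ?_, ?_⟩ <;>
    rw [smul_mul_assoc, mul_smul_comm, smul_smul]
  · rw [e1, smul_add, ← add_smul]
    norm_num
  · rw [e2, smul_neg, smul_add, ← add_smul]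
    norm_num
  · rw [e3, smul_add, ← add_smul]
    norm_num
  · rw [e4, smul_add, ← add_smul]
    norm_num

/-- for signatures with p - q ≡ 2,3,6,7 (mod 8), the products of
p₊ and p₋. -/
theorem idempotents_mod_eight_neg
    (p q n : ℕ) (hn : n = p + q)
    {V : Type*} [AddCommGroup V] [Module ℝ V]
    (Q : QuadraticForm ℝ V) (e : Module.Basis (Fin n) ℝ V)
    (horth : ∀ i j : Fin n, i ≠ j → QuadraticMap.polar Q (e i) (e j) = 0)
    (hQpos : ∀ i : Fin n, (i : ℕ) < p → Q (e i) = 1)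
    (hQneg : ∀ i : Fin n, p ≤ (i : ℕ) → Q (e i) = -1)
    (hsig : ((p : ℤ) - q) % 8 ∈ ({2, 3, 6, 7} : Set ℤ)) :
    ((1/2 : ℝ) • (1 + cliffVol Q e) * ((1/2 : ℝ) • (1 + cliffVol Q e))
        = (1/2 : ℝ) • cliffVol Q e) ∧
    ((1/2 : ℝ) • (1 - cliffVol Q e) * ((1/2 : ℝ) • (1 - cliffVol Q e))
        = -((1/2 : ℝ) • cliffVol Q e)) ∧
    ((1/2 : ℝ) • (1 + cliffVol Q e) * ((1/2 : ℝ) • (1 - cliffVol Q e))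
        = (1/2 : ℝ) • (1 : CliffordAlgebra Q)) ∧
    ((1/2 : ℝ) • (1 - cliffVol Q e) * ((1/2 : ℝ) • (1 + cliffVol Q e))
        = (1/2 : ℝ) • (1 : CliffordAlgebra Q)) := by
  exact aux_idem (cliffVol Q e)
    (aux_vol_sq_neg_one Q p q n hn e horth hQpos hQneg hsig)
end

section
/- Suppose (p - q : ℤ) % 8 ∈ {0, 1, 4, 5}, and set p₊ := (1/2) • (1 + ω) and p₋ := (1/2) • (1 - ω). Then the eigenspace Γ₊ := {x ∈ CliffordAlgebra Q | x * ω = x} equals the set of right multiples {x * p₊ | x ∈ CliffordAlgebra Q}, and Γ₋ := {x ∈ CliffordAlgebra Q | x * ω = -x} equals {x * p₋ | x ∈ CliffordAlgebra Q}. -/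
open CliffordAlgebra ExteriorAlgebra

section Aux

open CliffordAlgebra

private theorem myTriParity : ∀ m : ℕ, (∑ i ∈ Finset.range m, i) % 2 = ((m % 4)*(m % 4 - 1)/2) % 2
  | 0 => by simp
  | 1 => by simp
  | 2 => by simp [Finset.sum_range_succ]
  | 3 => by simp [Finset.sum_range_succ]
  | (k+4) => by
      have h := myTriParity k
      have h4 : (k+4) % 4 = k % 4 := by omega
      rw [h4, ← h]
      simp [Finset.sum_range_succ]
      omega

variable {V : Type*} [AddCommGroup V] [Module ℝ V] {n : ℕ}
  (Q : QuadraticForm ℝ V) (e : Module.Basis (Fin n) ℝ V)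

private theorem myAnti (horth : ∀ i j : Fin n, i ≠ j → QuadraticMap.polar Q (e i) (e j) = 0)
    (l : List (Fin n)) (v : Fin n) (hv : v ∉ l) :
    ((l.map fun i => ι Q (e i)).prod) * ι Q (e v)
      = ((-1:ℝ)^l.length) • (ι Q (e v) * (l.map fun i => ι Q (e i)).prod) := by
  induction l with
  | nil => simp
  | cons a t ih =>
    have hva : v ≠ a := fun h => hv (h ▸ List.mem_cons_self (a := a) (l := t))
    have hvt : v ∉ t := fun h => hv (List.mem_cons_of_mem a h)
    have hsw : ι Q (e a) * ι Q (e v) = - (ι Q (e v) * ι Q (e a)) := by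
      have := ι_mul_ι_add_swap (Q := Q) (e a) (e v)
      rw [horth a v (Ne.symm hva)] at this
      simp at this
      linear_combination (norm := module) this
    simp only [List.map_cons, List.prod_cons, List.length_cons, mul_assoc, ih hvt]
    rw [mul_smul_comm, ← mul_assoc, hsw, pow_succ]
    simp [smul_smul, mul_comm, mul_assoc]

private theorem mySq (horth : ∀ i j : Fin n, i ≠ j → QuadraticMap.polar Q (e i) (e j) = 0)
    (l : List (Fin n)) (hl : l.Nodup) :
    ((l.map fun i => ι Q (e i)).prod) * ((l.map fun i => ι Q (e i)).prod)
      = (((-1:ℝ)^(∑ i ∈ Finset.range l.length, i)) * (l.map fun i => Q (e i)).prod) • 1 := by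
  induction l with
  | nil => simp
  | cons a t ih =>
    obtain ⟨ha, ht⟩ := List.nodup_cons.mp hl
    simp only [List.map_cons, List.prod_cons]
    calc ι Q (e a) * (t.map fun i => ι Q (e i)).prod * (ι Q (e a) * (t.map fun i => ι Q (e i)).prod)
        = ι Q (e a) * ((t.map fun i => ι Q (e i)).prod * ι Q (e a)) * (t.map fun i => ι Q (e i)).prod := by
          simp [mul_assoc]
      _ = ((-1:ℝ)^t.length) • (ι Q (e a) * (ι Q (e a) * ((t.map fun i => ι Q (e i)).prod * (t.map fun i => ι Q (e i)).prod))) := by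
          rw [myAnti Q e horth t a ha]
          simp [mul_smul_comm, smul_mul_assoc, mul_assoc]
      _ = _ := by
          rw [← mul_assoc, ι_sq_scalar, Algebra.algebraMap_eq_smul_one, ih ht]
          simp only [List.map_cons, List.prod_cons, List.length_cons, Finset.sum_range_succ]
          rw [smul_mul_smul_comm, one_mul, smul_smul]
          congr 1
          rw [pow_add]
          ring

private theorem myVolSq (p q : ℕ) (hn : n = p + q)
    (horth : ∀ i j : Fin n, i ≠ j → QuadraticMap.polar Q (e i) (e j) = 0)
    (hQpos : ∀ i : Fin n, (i : ℕ) < p → Q (e i) = 1)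
    (hQneg : ∀ i : Fin n, p ≤ (i : ℕ) → Q (e i) = -1)
    (hsig : ((p : ℤ) - q) % 8 ∈ ({0, 1, 4, 5} : Set ℤ)) :
    cliffVol Q e * cliffVol Q e = 1 := by
  rw [cliffVol, mySq Q e horth (List.finRange n) (List.nodup_finRange n)]
  have hprod : ((List.finRange n).map fun i => Q (e i)).prod = (-1:ℝ)^q := by
    rw [← Fin.prod_univ_def]
    have hg : ∀ i : Fin n, Q (e i) = (fun k : ℕ => if k < p then (1:ℝ) else -1) (i : ℕ) := by
      intro i
      by_cases h : (i : ℕ) < p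
      · simp [h, hQpos i h]
      · simp [h, hQneg i (le_of_not_gt h)]
    rw [Finset.prod_congr rfl fun i _ => hg i]
    rw [Fin.prod_univ_eq_prod_range (fun k : ℕ => if k < p then (1:ℝ) else -1) n]
    subst hn
    rw [Finset.prod_range_add]
    have h1 : ∀ i ∈ Finset.range p, (if i < p then (1:ℝ) else -1) = 1 := by
      intro i hi; simp [Finset.mem_range.mp hi]
    have h2 : ∀ i : ℕ, (if p + i < p then (1:ℝ) else -1) = -1 := by
      intro i; simp
    rw [Finset.prod_congr rfl h1, Finset.prod_const_one, one_mul]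
    simp only [h2]
    rw [Finset.prod_const]
    simp
  rw [List.length_finRange, hprod, ← pow_add]
  have heven : Even (∑ i ∈ Finset.range n, i + q) := by
    simp only [Set.mem_insert_iff, Set.mem_singleton_iff] at hsig
    have hp := myTriParity n
    have hc : (n % 4 = 0 ∧ q % 2 = 0) ∨ (n % 4 = 1 ∧ q % 2 = 0)
        ∨ (n % 4 = 2 ∧ q % 2 = 1) ∨ (n % 4 = 3 ∧ q % 2 = 1) := by omega
    rw [Nat.even_iff]
    rcases hc with ⟨h1,h2⟩|⟨h1,h2⟩|⟨h1,h2⟩|⟨h1,h2⟩ <;> rw [h1] at hp <;> norm_num at hp <;> omega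
  rw [heven.neg_one_pow, one_smul]

end Aux

/-- the eigenspaces of right multiplication by ω are the sets of right
multiples of p₊ and p₋. -/
theorem eigenspace_eq_range_mul
    (p q n : ℕ) (hn : n = p + q)
    {V : Type*} [AddCommGroup V] [Module ℝ V]
    (Q : QuadraticForm ℝ V) (e : Module.Basis (Fin n) ℝ V)
    (horth : ∀ i j : Fin n, i ≠ j → QuadraticMap.polar Q (e i) (e j) = 0)
    (hQpos : ∀ i : Fin n, (i : ℕ) < p → Q (e i) = 1)
    (hQneg : ∀ i : Fin n, p ≤ (i : ℕ) → Q (e i) = -1)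
    (hsig : ((p : ℤ) - q) % 8 ∈ ({0, 1, 4, 5} : Set ℤ)) :
    ({x : CliffordAlgebra Q | x * cliffVol Q e = x}
        = Set.range (fun x : CliffordAlgebra Q => x * ((1/2 : ℝ) • (1 + cliffVol Q e)))) ∧
    ({x : CliffordAlgebra Q | x * cliffVol Q e = -x}
        = Set.range (fun x : CliffordAlgebra Q => x * ((1/2 : ℝ) • (1 - cliffVol Q e)))) := by
  have hw : cliffVol Q e * cliffVol Q e = 1 :=
    myVolSq Q e p q hn horth hQpos hQneg hsig
  set w := cliffVol Q e with hwdef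
  constructor
  · ext x
    simp only [Set.mem_setOf_eq, Set.mem_range]
    constructor
    · intro hx
      refine ⟨x, ?_⟩
      rw [mul_smul_comm, mul_add, mul_one, hx, ← two_smul ℝ x, smul_smul]
      norm_num
    · rintro ⟨y, rfl⟩
      rw [mul_smul_comm, smul_mul_assoc, mul_assoc, add_mul, one_mul, hw, add_comm w 1]
  · ext x
    simp only [Set.mem_setOf_eq, Set.mem_range]
    constructor
    · intro hx
      refine ⟨x, ?_⟩
      rw [mul_smul_comm, mul_sub, mul_one, hx, sub_neg_eq_add, ← two_smul ℝ x, smul_smul]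
      norm_num
    · rintro ⟨y, rfl⟩
      rw [mul_smul_comm, smul_mul_assoc, mul_assoc, sub_mul, one_mul, hw,
        show w - 1 = -(1 - w) from (neg_sub 1 w).symm, mul_neg, smul_neg]
end

section
/- Suppose n is odd and (p - q : ℤ) % 8 ∈ {0, 1, 4, 5}, and set p₊ := (1/2) • (1 + ω) and p₋ := (1/2) • (1 - ω). Then right multiplication by p₊ (respectively p₋) is multiplicative: for all x, y ∈ CliffordAlgebra Q, (x * p₊) * (y * p₊) = (x * y) * p₊ and (x * p₋) * (y * p₋) = (x * y) * p₋; in particular the eigenspaces Γ₊ = {x | x * ω = x} and Γ₋ = {x | x * ω = -x} are closed under multiplication. -/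
open CliffordAlgebra ExteriorAlgebra

section aux
variable {V : Type*} [AddCommGroup V] [Module ℝ V]

lemma ι_anticomm (Q : QuadraticForm ℝ V) {a b : V}
    (h : QuadraticMap.polar Q a b = 0) :
    ι Q a * ι Q b = -(ι Q b * ι Q a) := by
  have h2 := CliffordAlgebra.ι_mul_ι_add_swap (Q := Q) a b
  rw [h, map_zero] at h2
  exact eq_neg_of_add_eq_zero_left h2

lemma ι_mul_listProd (Q : QuadraticForm ℝ V) (v : V) (l : List V) (s : V → ℝ)
    (h : ∀ w ∈ l, ι Q v * ι Q w = s w • (ι Q w * ι Q v)) :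
    ι Q v * (l.map (ι Q)).prod
      = (l.map s).prod • ((l.map (ι Q)).prod * ι Q v) := by
  induction l with
  | nil => simp
  | cons a t ih =>
    simp only [List.map_cons, List.prod_cons]
    rw [← mul_assoc, h a (by simp), smul_mul_assoc, mul_assoc,
        ih (fun w hw => h w (by simp [hw])), mul_smul_comm, smul_smul, mul_assoc]

lemma listProd_sq (Q : QuadraticForm ℝ V) (l : List V)
    (h : l.Pairwise fun a b => QuadraticMap.polar Q a b = 0) :
    (l.map (ι Q)).prod * (l.map (ι Q)).prod
      = (((-1:ℝ)^(l.length.choose 2)) * (l.map fun w => Q w).prod) • 1 := by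
  induction l with
  | nil => simp
  | cons a t ih =>
    rcases List.pairwise_cons.mp h with ⟨ha, ht⟩
    simp only [List.map_cons, List.prod_cons, List.length_cons]
    have hstep : ι Q a * (t.map (ι Q)).prod
        = ((-1:ℝ)^t.length) • ((t.map (ι Q)).prod * ι Q a) := by
      have := ι_mul_listProd Q a t (fun _ => (-1:ℝ)) (fun w hw => by
        rw [ι_anticomm Q (ha w hw), neg_one_smul])
      simpa using this
    calc ι Q a * (t.map (ι Q)).prod * (ι Q a * (t.map (ι Q)).prod)
        = ι Q a * ((t.map (ι Q)).prod * ι Q a) * (t.map (ι Q)).prod := by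
          rw [mul_assoc, mul_assoc, mul_assoc]
      _ = ι Q a * (((-1:ℝ)^t.length)⁻¹ • (ι Q a * (t.map (ι Q)).prod)) * (t.map (ι Q)).prod := by
          rw [hstep, inv_smul_smul₀ (by positivity)]
      _ = ((-1:ℝ)^t.length)⁻¹ • ((ι Q a * ι Q a) * ((t.map (ι Q)).prod * (t.map (ι Q)).prod)) := by
          rw [mul_smul_comm, smul_mul_assoc]
          congr 1
          rw [← mul_assoc, mul_assoc]
      _ = ((-1:ℝ)^t.length)⁻¹ • ((Q a) • (1:CliffordAlgebra Q) * (((-1:ℝ)^(t.length.choose 2)) * (t.map fun w => Q w).prod) • 1) := by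
          rw [ι_sq_scalar, ih ht, Algebra.algebraMap_eq_smul_one]
      _ = (((-1:ℝ)^((t.length+1).choose 2)) * (Q a * (t.map fun w => Q w).prod)) • 1 := by
          rw [smul_mul_assoc, one_mul, smul_smul, smul_smul]
          congr 1
          have hc : (t.length+1).choose 2 = t.length + t.length.choose 2 := by
            rw [Nat.choose_succ_succ]
            simp [Nat.choose_one_right, Nat.add_comm]
          rw [hc, pow_add]
          have : ((-1:ℝ)^t.length)⁻¹ = (-1:ℝ)^t.length := by
            rw [inv_eq_one_div]
            rcases Nat.even_or_odd t.length with he | ho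
            · rw [he.neg_one_pow]; norm_num
            · rw [ho.neg_one_pow]; norm_num
          rw [this]; ring

end aux

section vol
variable {V : Type*} [AddCommGroup V] [Module ℝ V] {n : ℕ}

lemma cliffVol_eq (Q : QuadraticForm ℝ V) (e : Module.Basis (Fin n) ℝ V) :
    cliffVol Q e = (((List.finRange n).map e).map (ι Q)).prod := by
  rw [cliffVol, List.map_map]; rfl

lemma vol_comm (Q : QuadraticForm ℝ V) (e : Module.Basis (Fin n) ℝ V)
    (horth : ∀ i j : Fin n, i ≠ j → QuadraticMap.polar Q (e i) (e j) = 0)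
    (hodd : Odd n) (x : CliffordAlgebra Q) :
    x * cliffVol Q e = cliffVol Q e * x := by
  classical
  set ω := cliffVol Q e with hω
  -- first: for basis vectors
  have hbasis : ∀ j : Fin n, ι Q (e j) * ω = ω * ι Q (e j) := by
    intro j
    have hstep := ι_mul_listProd Q (e j) ((List.finRange n).map e)
      (fun w => if w = e j then (1:ℝ) else -1) ?_
    · rw [hω, cliffVol_eq, hstep]
      have hprod : ((((List.finRange n).map e)).map
          fun w => if w = e j then (1:ℝ) else -1).prod = 1 := by
        rw [List.map_map]
        have : ((List.finRange n).map fun i => if e i = e j then (1:ℝ) else -1).prod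
            = ∏ i : Fin n, (if i = j then (1:ℝ) else -1) := by
          rw [Fin.prod_univ_def]
          congr 1
          apply List.map_congr_left
          intro i _
          simp [e.injective.eq_iff]
        rw [show ((fun w => if w = e j then (1:ℝ) else -1) ∘ e)
            = fun i => if e i = e j then (1:ℝ) else -1 from rfl, this]
        rw [← Finset.mul_prod_erase Finset.univ _ (Finset.mem_univ j), if_pos rfl, one_mul,
          Finset.prod_congr rfl (fun i hi => if_neg (Finset.ne_of_mem_erase hi)),
          Finset.prod_const, Finset.card_erase_of_mem (Finset.mem_univ j),
          Finset.card_univ, Fintype.card_fin]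
        rcases hodd with ⟨m, hm⟩
        have : n - 1 = 2 * m := by omega
        rw [this]
        simp [pow_mul]
      rw [hprod, one_smul]
    · intro w hw
      rcases List.mem_map.mp hw with ⟨i, _, rfl⟩
      by_cases hij : e i = e j
      · rw [if_pos hij, one_smul, hij]
      · rw [if_neg hij, ι_anticomm Q (horth j i (fun hji => hij (by rw [hji]))), neg_one_smul]
  induction x using CliffordAlgebra.induction with
  | algebraMap r => rw [Algebra.commutes]
  | ι v =>
    have hv : v = ∑ i, e.repr v i • e i := (e.sum_repr v).symm
    rw [hv]
    simp only [map_sum, map_smul, Finset.sum_mul, Finset.mul_sum, smul_mul_assoc, mul_smul_comm]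
    exact Finset.sum_congr rfl fun i _ => by rw [hbasis i]
  | mul a b ha hb => rw [mul_assoc, hb, ← mul_assoc, ha, mul_assoc]
  | add a b ha hb => rw [add_mul, mul_add, ha, hb]

lemma vol_sq (p q : ℕ) (hn : n = p + q) (Q : QuadraticForm ℝ V) (e : Module.Basis (Fin n) ℝ V)
    (horth : ∀ i j : Fin n, i ≠ j → QuadraticMap.polar Q (e i) (e j) = 0)
    (hQpos : ∀ i : Fin n, (i : ℕ) < p → Q (e i) = 1)
    (hQneg : ∀ i : Fin n, p ≤ (i : ℕ) → Q (e i) = -1)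
    (hodd : Odd n) (hsig : ((p : ℤ) - q) % 8 ∈ ({0, 1, 4, 5} : Set ℤ)) :
    cliffVol Q e * cliffVol Q e = 1 := by
  have hpair : (((List.finRange n).map e)).Pairwise fun a b => QuadraticMap.polar Q a b = 0 := by
    refine List.Pairwise.map e (fun a b hab => horth a b hab) ?_
    exact (List.nodup_finRange n)
  rw [cliffVol_eq, listProd_sq Q _ hpair]
  have hlen : ((List.finRange n).map e).length = n := by simp
  have hQprod : (((List.finRange n).map e).map fun w => Q w).prod = (-1:ℝ)^q := by
    rw [List.map_map, show ((fun w => Q w) ∘ e) = fun i => Q (e i) from rfl,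
      ← Fin.prod_univ_def]
    subst hn
    rw [Fin.prod_univ_add]
    have h1 : ∀ i : Fin p, Q (e (Fin.castAdd q i)) = 1 := fun i => hQpos _ (by simp [i.isLt])
    have h2 : ∀ i : Fin q, Q (e (Fin.natAdd p i)) = -1 := fun i => hQneg _ (by simp)
    simp [h1, h2]
  rw [hlen, hQprod, ← pow_add]
  rcases hodd with ⟨m, hm⟩
  have hmq : (m + q) % 2 = 0 := by
    simp only [Set.mem_insert_iff, Set.mem_singleton_iff] at hsig
    have hpq : p + q = 2*m + 1 := by omega
    rcases hsig with h | h | h | h <;> omega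
  obtain ⟨k, hk⟩ : ∃ k, m + q = 2 * k := ⟨(m+q)/2, (Nat.mul_div_cancel' (Nat.dvd_of_mod_eq_zero hmq)).symm⟩
  have hch : n.choose 2 = 2*m*m + m := by
    rw [Nat.choose_two_right, hm, show 2*m+1-1 = 2*m from rfl,
      show (2*m+1) * (2*m) = (2*m*m+m)*2 from by ring, Nat.mul_div_cancel _ two_pos]
  have heven : Even (n.choose 2 + q) := by
    refine ⟨m*m + k, ?_⟩
    rw [hch]
    linarith [hk]
  rw [heven.neg_one_pow, one_smul]

end vol

/-- for n odd and p - q ≡ 0,1,4,5 (mod 8), right multiplication by p₊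
(resp. p₋) is multiplicative, and the eigenspaces are closed under multiplication. -/
theorem right_mul_idempotent_multiplicative
    (p q n : ℕ) (hn : n = p + q)
    {V : Type*} [AddCommGroup V] [Module ℝ V]
    (Q : QuadraticForm ℝ V) (e : Module.Basis (Fin n) ℝ V)
    (horth : ∀ i j : Fin n, i ≠ j → QuadraticMap.polar Q (e i) (e j) = 0)
    (hQpos : ∀ i : Fin n, (i : ℕ) < p → Q (e i) = 1)
    (hQneg : ∀ i : Fin n, p ≤ (i : ℕ) → Q (e i) = -1)
    (hodd : Odd n) (hsig : ((p : ℤ) - q) % 8 ∈ ({0, 1, 4, 5} : Set ℤ)) :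
    (∀ x y : CliffordAlgebra Q,
      (x * ((1/2 : ℝ) • (1 + cliffVol Q e))) * (y * ((1/2 : ℝ) • (1 + cliffVol Q e)))
        = (x * y) * ((1/2 : ℝ) • (1 + cliffVol Q e))) ∧
    (∀ x y : CliffordAlgebra Q,
      (x * ((1/2 : ℝ) • (1 - cliffVol Q e))) * (y * ((1/2 : ℝ) • (1 - cliffVol Q e)))
        = (x * y) * ((1/2 : ℝ) • (1 - cliffVol Q e))) ∧
    (∀ x y : CliffordAlgebra Q, x * cliffVol Q e = x → y * cliffVol Q e = y →
      (x * y) * cliffVol Q e = x * y) ∧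
    (∀ x y : CliffordAlgebra Q, x * cliffVol Q e = -x → y * cliffVol Q e = -y →
      (x * y) * cliffVol Q e = -(x * y)) := by
  have hc : ∀ x, x * cliffVol Q e = cliffVol Q e * x := vol_comm Q e horth hodd
  have hsq : cliffVol Q e * cliffVol Q e = 1 :=
    vol_sq p q hn Q e horth hQpos hQneg hodd hsig
  set ω := cliffVol Q e with hωdef
  have main : ∀ u : CliffordAlgebra Q, (∀ z, z * u = u * z) → u * u = (2:ℝ) • u →
      ∀ x y, (x * ((1/2:ℝ) • u)) * (y * ((1/2:ℝ) • u)) = (x*y) * ((1/2:ℝ) • u) := by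
    intro u hcu hu2 x y
    have key : (x*u)*(y*u) = (2:ℝ) • ((x*y)*u) := by
      calc (x*u)*(y*u) = x*((u*y)*u) := by rw [mul_assoc, mul_assoc]
        _ = x*((y*u)*u) := by rw [hcu y]
        _ = x*(y*(u*u)) := by rw [mul_assoc]
        _ = x*(y*((2:ℝ)•u)) := by rw [hu2]
        _ = (2:ℝ)•((x*y)*u) := by rw [mul_smul_comm, mul_smul_comm, mul_assoc]
    have e1 : x * ((1/2:ℝ)•u) = (1/2:ℝ)•(x*u) := mul_smul_comm _ _ _
    have e2 : y * ((1/2:ℝ)•u) = (1/2:ℝ)•(y*u) := mul_smul_comm _ _ _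
    have e3 : (x*y) * ((1/2:ℝ)•u) = (1/2:ℝ)•((x*y)*u) := mul_smul_comm _ _ _
    rw [e1, e2, e3, smul_mul_assoc, mul_smul_comm, key, smul_smul, smul_smul]
    norm_num
  have hcu1 : ∀ z, z * (1 + ω) = (1 + ω) * z := fun z => by
    rw [mul_add, add_mul, mul_one, one_mul, hc z]
  have hcu2 : ∀ z, z * (1 - ω) = (1 - ω) * z := fun z => by
    rw [mul_sub, sub_mul, mul_one, one_mul, hc z]
  have hu1 : (1 + ω) * (1 + ω) = (2:ℝ) • (1 + ω) := by
    rw [add_mul, one_mul, mul_add, mul_one, hsq, two_smul]; abel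
  have hu2 : (1 - ω) * (1 - ω) = (2:ℝ) • (1 - ω) := by
    rw [sub_mul, one_mul, mul_sub, mul_one, hsq, two_smul]; abel
  refine ⟨main _ hcu1 hu1, main _ hcu2 hu2, ?_, ?_⟩
  · intro x y hx hy
    rw [mul_assoc, hy]
  · intro x y hx hy
    rw [mul_assoc, hy, mul_neg]
end

section
/- Suppose n is odd and (p - q : ℤ) % 8 ∈ {0, 1, 4, 5}. If f ∈ Λ(V) satisfies ⋆f = f, then f = P_L f + ⋆(P_L f); if f satisfies ⋆f = -f, then f = P_L f - ⋆(P_L f). Equivalently, every ±1-eigenform f of ⋆ satisfies f = 2 • P_±(P_L f) where P_±(g) := (1/2) • (g ± ⋆g). -/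
open CliffordAlgebra ExteriorAlgebra

section Aux

variable {V : Type*} [AddCommGroup V] [Module ℝ V] {n : ℕ}

/-- Product of Clifford images of basis vectors along a list of indices. -/
noncomputable def cpAux (Q : QuadraticForm ℝ V) (e : Module.Basis (Fin n) ℝ V)
    (l : List (Fin n)) : CliffordAlgebra Q :=
  (l.map fun i => CliffordAlgebra.ι Q (e i)).prod

/-- Product of exterior images of basis vectors along a list of indices. -/
noncomputable def epAux (e : Module.Basis (Fin n) ℝ V) (l : List (Fin n)) :
    ExteriorAlgebra ℝ V :=
  (l.map fun i => ExteriorAlgebra.ι ℝ (e i)).prod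

lemma cpAux_cons (Q : QuadraticForm ℝ V) (e : Module.Basis (Fin n) ℝ V) (i : Fin n)
    (l : List (Fin n)) : cpAux Q e (i :: l) = CliffordAlgebra.ι Q (e i) * cpAux Q e l := by
  simp [cpAux]

lemma epAux_cons (e : Module.Basis (Fin n) ℝ V) (i : Fin n) (l : List (Fin n)) :
    epAux e (i :: l) = ExteriorAlgebra.ι ℝ (e i) * epAux e l := by
  simp [epAux]

lemma ext_anti (a b : V) :
    ExteriorAlgebra.ι ℝ a * ExteriorAlgebra.ι ℝ b
      = -(ExteriorAlgebra.ι ℝ b * ExteriorAlgebra.ι ℝ a) := by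
  have := CliffordAlgebra.ι_mul_ι_comm (Q := (0 : QuadraticForm ℝ V)) a b
  simpa [QuadraticMap.polar] using this

lemma ep_eat (e : Module.Basis (Fin n) ℝ V) (i : Fin n) :
    ∀ l : List (Fin n), i ∈ l → ExteriorAlgebra.ι ℝ (e i) * epAux e l = 0
  | [], hm => absurd hm (List.not_mem_nil (a := i))
  | j :: t, hm => by
    rcases eq_or_ne i j with rfl | hij
    · rw [epAux_cons, ← mul_assoc, ExteriorAlgebra.ι_sq_zero, zero_mul]
    · have hit : i ∈ t := by simpa [hij] using hm
      rw [epAux_cons, ← mul_assoc, ext_anti (e i) (e j), neg_mul, mul_assoc,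
        ep_eat e i t hit, mul_zero, neg_zero]

lemma epAux_of_not_nodup (e : Module.Basis (Fin n) ℝ V) :
    ∀ l : List (Fin n), ¬ l.Nodup → epAux e l = 0
  | [], h => absurd List.nodup_nil h
  | j :: t, h => by
    rw [List.nodup_cons] at h
    push_neg at h
    by_cases hjt : j ∈ t
    · rw [epAux_cons, ep_eat e j t hjt]
    · rw [epAux_cons, epAux_of_not_nodup e t (h hjt), mul_zero]

lemma ep_span (e : Module.Basis (Fin n) ℝ V) :
    Submodule.span ℝ {x : ExteriorAlgebra ℝ V | ∃ l : List (Fin n), x = epAux e l} = ⊤ := by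
  set S : Set (ExteriorAlgebra ℝ V) := {x | ∃ l : List (Fin n), x = epAux e l} with hS
  rw [eq_top_iff]
  rintro x -
  induction x using ExteriorAlgebra.induction with
  | algebraMap r =>
      rw [Algebra.algebraMap_eq_smul_one]
      exact Submodule.smul_mem _ _ (Submodule.subset_span ⟨[], rfl⟩)
  | ι v =>
      have h1 : ∀ i : Fin n, epAux e [i] = ExteriorAlgebra.ι ℝ (e i) := by
        intro i; simp [epAux]
      have hv : ExteriorAlgebra.ι ℝ v = ∑ i : Fin n, e.repr v i • epAux e [i] := by
        simp_rw [h1]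
        conv_lhs => rw [← Module.Basis.sum_repr e v]
        rw [map_sum]
        simp_rw [map_smul]
      rw [hv]
      exact Submodule.sum_mem _ fun i _ =>
        Submodule.smul_mem _ _ (Submodule.subset_span ⟨[i], rfl⟩)
  | mul a b ha hb =>
      have hmul : a * b ∈ Submodule.span ℝ S * Submodule.span ℝ S :=
        Submodule.mul_mem_mul ha hb
      rw [Submodule.span_mul_span] at hmul
      refine Submodule.span_le.mpr ?_ hmul
      rintro z hz
      rw [Set.mem_mul] at hz
      obtain ⟨u, ⟨lu, rfl⟩, w, ⟨lw, rfl⟩, rfl⟩ := hz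
      exact Submodule.subset_span ⟨lu ++ lw, by simp [epAux, List.prod_append]⟩
  | add a b ha hb => exact Submodule.add_mem _ ha hb

variable (Q : QuadraticForm ℝ V) (e : Module.Basis (Fin n) ℝ V)
variable (horth : ∀ i j : Fin n, i ≠ j → QuadraticMap.polar Q (e i) (e j) = 0)

include horth in
lemma cl_anti (i j : Fin n) (hij : i ≠ j) :
    CliffordAlgebra.ι Q (e i) * CliffordAlgebra.ι Q (e j)
      = -(CliffordAlgebra.ι Q (e j) * CliffordAlgebra.ι Q (e i)) := by
  rw [CliffordAlgebra.ι_mul_ι_comm, horth i j hij, map_zero, zero_sub]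

include horth in
lemma cl_absorb : ∀ (l : List (Fin n)) (i : Fin n), i ∈ l →
    ∃ r : ℝ, CliffordAlgebra.ι Q (e i) * cpAux Q e l = r • cpAux Q e (l.erase i)
  | [], i, hm => absurd hm (List.not_mem_nil (a := i))
  | j :: t, i, hm => by
    rcases eq_or_ne i j with rfl | hij
    · refine ⟨Q (e i), ?_⟩
      rw [List.erase_cons_head, cpAux_cons, ← mul_assoc, CliffordAlgebra.ι_sq_scalar,
        ← Algebra.smul_def]
    · have hit : i ∈ t := by simpa [hij] using hm
      obtain ⟨r, hr⟩ := cl_absorb t i hit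
      refine ⟨-r, ?_⟩
      rw [List.erase_cons, if_neg (by simpa using Ne.symm hij), cpAux_cons, cpAux_cons, ← mul_assoc,
        cl_anti Q e horth i j hij, neg_mul, mul_assoc, hr, mul_smul_comm, neg_smul]

include horth in
lemma cl_mul_vol : ∀ l : List (Fin n), l.Nodup →
    ∃ (r : ℝ) (m : List (Fin n)), m.Nodup ∧ m.length + l.length = n ∧
      (∀ j, j ∈ m ↔ j ∉ l) ∧ cpAux Q e l * cliffVol Q e = r • cpAux Q e m
  | [], _ => by
    refine ⟨1, List.finRange n, List.nodup_finRange n, by simp, fun j => by simp, ?_⟩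
    have : cpAux Q e [] = 1 := by simp [cpAux]
    rw [this, one_mul, one_smul]
    rfl
  | i :: t, hnd => by
    rw [List.nodup_cons] at hnd
    obtain ⟨r, m, hm1, hm2, hm3, hm4⟩ := cl_mul_vol t hnd.2
    have him : i ∈ m := (hm3 i).mpr hnd.1
    obtain ⟨r', hr'⟩ := cl_absorb Q e horth m i him
    refine ⟨r * r', m.erase i, hm1.erase i, ?_, ?_, ?_⟩
    · have h5 := List.length_erase_of_mem him
      have h6 : 1 ≤ m.length := List.length_pos_of_mem him
      simp only [List.length_cons] at *
      omega
    · intro j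
      rw [List.Nodup.mem_erase_iff hm1, hm3 j, List.mem_cons, not_or]
    · rw [cpAux_cons, mul_assoc, hm4, mul_smul_comm, hr', smul_smul]

include horth in
lemma assoc_neg_zero (i j : Fin n) (hij : i ≠ j) :
    (QuadraticMap.associated (R := ℝ) (M := V) (-Q)) (e i) (e j) = 0 := by
  have h0 : QuadraticMap.polar Q (e i) (e j) = 0 := horth i j hij
  have h1 : (-Q) (e i + e j) - (-Q) (e i) - (-Q) (e j)
      = -(QuadraticMap.polar Q (e i) (e j)) := by
    simp [QuadraticMap.polar, QuadraticMap.neg_apply]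
    ring
  rw [QuadraticMap.associated, QuadraticMap.associated_apply, h1, h0, neg_zero, smul_zero]

lemma contract_ep (d : Module.Dual ℝ V) :
    ∀ l : List (Fin n), (∀ j ∈ l, d (e j) = 0) →
      CliffordAlgebra.contractLeft (Q := (0 : QuadraticForm ℝ V)) d (epAux e l) = 0
  | [], _ => by
    have : epAux e ([] : List (Fin n)) = 1 := by simp [epAux]
    rw [this]
    simp
  | j :: t, h => by
    rw [epAux_cons, CliffordAlgebra.contractLeft_ι_mul, h j (List.mem_cons_self (a := j) (l := t)),
      contract_ep d t (fun k hk => h k (List.mem_cons_of_mem _ hk)), mul_zero, zero_smul,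
      sub_zero]

include horth in
lemma ce_cp : ∀ l : List (Fin n), l.Nodup →
    CliffordAlgebra.equivExterior Q (cpAux Q e l) = epAux e l
  | [], _ => by
    have h1 : cpAux Q e ([] : List (Fin n)) = 1 := by simp [cpAux]
    have h2 : epAux e ([] : List (Fin n)) = 1 := by simp [epAux]
    rw [h1, h2]
    exact CliffordAlgebra.changeForm_one
      (CliffordAlgebra.changeForm.associated_neg_proof (Q := Q))
  | i :: t, hnd => by
    rw [List.nodup_cons] at hnd
    have key : CliffordAlgebra.equivExterior Q (cpAux Q e t) = epAux e t :=
      ce_cp t hnd.2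
    rw [cpAux_cons]
    show CliffordAlgebra.changeForm CliffordAlgebra.changeForm.associated_neg_proof
        (CliffordAlgebra.ι Q (e i) * cpAux Q e t) = _
    rw [CliffordAlgebra.changeForm_ι_mul]
    have hc : CliffordAlgebra.changeForm
        (CliffordAlgebra.changeForm.associated_neg_proof (Q := Q)) (cpAux Q e t)
        = epAux e t := key
    rw [hc, epAux_cons]
    have hcontract : CliffordAlgebra.contractLeft (Q := (0 : QuadraticForm ℝ V))
        ((QuadraticMap.associated (R := ℝ) (M := V) (-Q)) (e i)) (epAux e t) = 0 := by
      refine contract_ep e _ t fun k hk => ?_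
      exact assoc_neg_zero Q e horth i k (fun hik => hnd.1 (hik ▸ hk))
    rw [hcontract, sub_zero]

lemma ep_mem : ∀ l : List (Fin n), epAux e l ∈ ⋀[ℝ]^(l.length) V
  | [] => by
    have : epAux e ([] : List (Fin n)) = 1 := by simp [epAux]
    rw [this]
    have h0 : (⋀[ℝ]^(([] : List (Fin n)).length) V) = (1 : Submodule ℝ (ExteriorAlgebra ℝ V)) :=
      pow_zero _
    rw [h0]
    exact Submodule.one_le.mp le_rfl
  | i :: t => by
    rw [epAux_cons]
    have h0 : (⋀[ℝ]^((i :: t).length) V)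
        = LinearMap.range (ExteriorAlgebra.ι ℝ : V →ₗ[ℝ] ExteriorAlgebra ℝ V)
          * ⋀[ℝ]^(t.length) V := by
      rw [List.length_cons]
      exact pow_succ' _ _
    rw [h0]
    exact Submodule.mul_mem_mul (LinearMap.mem_range_self _ _) (ep_mem t)

lemma PLow_add (f g : ExteriorAlgebra ℝ V) :
    PLow n (f + g) = PLow n f + PLow n g := by
  unfold PLow
  rw [← Finset.sum_add_distrib]
  refine Finset.sum_congr rfl fun k _ => ?_
  rw [DirectSum.decompose_add]
  rfl

lemma PLow_smul (r : ℝ) (f : ExteriorAlgebra ℝ V) :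
    PLow n (r • f) = r • PLow n f := by
  unfold PLow
  rw [Finset.smul_sum]
  refine Finset.sum_congr rfl fun k _ => ?_
  rw [DirectSum.decompose_smul]
  rfl

lemma PLow_zero : PLow (V := V) n 0 = 0 := by
  unfold PLow
  refine Finset.sum_eq_zero fun k _ => ?_
  rw [DirectSum.decompose_zero]
  rfl

lemma PLow_neg (f : ExteriorAlgebra ℝ V) : PLow n (-f) = -PLow n f := by
  have h := PLow_add (n := n) (-f) f
  rw [neg_add_cancel, PLow_zero] at h
  exact eq_neg_of_add_eq_zero_left h.symm

lemma PLow_of_mem {k : ℕ} {x : ExteriorAlgebra ℝ V} (hx : x ∈ ⋀[ℝ]^k V) :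
    PLow n x = if k ≤ n / 2 then x else 0 := by
  unfold PLow
  by_cases hk : k ≤ n / 2
  · rw [if_pos hk]
    rw [Finset.sum_eq_single_of_mem k (Finset.mem_range.mpr (by omega))
      (fun j _ hj => DirectSum.decompose_of_mem_ne (fun i => ⋀[ℝ]^i V) hx (Ne.symm hj))]
    exact DirectSum.decompose_of_mem_same (fun i => ⋀[ℝ]^i V) hx
  · rw [if_neg hk]
    refine Finset.sum_eq_zero fun j hj => ?_
    rw [Finset.mem_range] at hj
    exact DirectSum.decompose_of_mem_ne (fun i => ⋀[ℝ]^i V) hx (by omega)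

lemma hodge_add (f g : ExteriorAlgebra ℝ V) :
    hodge Q e (f + g) = hodge Q e f + hodge Q e g := by
  simp [hodge, graf, map_add, add_mul]

lemma hodge_smul (r : ℝ) (f : ExteriorAlgebra ℝ V) :
    hodge Q e (r • f) = r • hodge Q e f := by
  simp [hodge, graf, map_smul, smul_mul_assoc]

lemma hodge_zero : hodge Q e (0 : ExteriorAlgebra ℝ V) = 0 := by
  simp [hodge, graf]

include horth in
lemma hodge_ep (l : List (Fin n)) (hnd : l.Nodup) :
    ∃ (r : ℝ) (m : List (Fin n)), m.Nodup ∧ m.length + l.length = n ∧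
      hodge Q e (epAux e l) = r • epAux e m := by
  obtain ⟨r, m, h1, h2, _, h4⟩ := cl_mul_vol Q e horth l hnd
  refine ⟨r, m, h1, h2, ?_⟩
  have hsymm : (CliffordAlgebra.equivExterior Q).symm (epAux e l) = cpAux Q e l := by
    rw [← ce_cp Q e horth l hnd, LinearEquiv.symm_apply_apply]
  rw [hodge, graf, hsymm, volForm, LinearEquiv.symm_apply_apply, h4, map_smul,
    ce_cp Q e horth m h1]

include horth in
lemma core (hodd : Odd n) (f : ExteriorAlgebra ℝ V) :
    hodge Q e (PLow n f) = hodge Q e f - PLow n (hodge Q e f) := by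
  have hf : f ∈ Submodule.span ℝ {x : ExteriorAlgebra ℝ V | ∃ l : List (Fin n), x = epAux e l} := by
    rw [ep_span e]; trivial
  have hn2 : n % 2 = 1 := Nat.odd_iff.mp hodd
  induction hf using Submodule.span_induction with
  | mem x hx =>
      obtain ⟨l, rfl⟩ := hx
      by_cases hnd : l.Nodup
      · obtain ⟨r, m, h1, h2, h5⟩ := hodge_ep Q e horth l hnd
        have hl := ep_mem e l
        have hm := ep_mem e m
        by_cases hk : l.length ≤ n / 2
        · rw [PLow_of_mem hl, if_pos hk, h5, PLow_smul, PLow_of_mem hm,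
            if_neg (by omega), smul_zero, sub_zero]
        · rw [PLow_of_mem hl, if_neg hk, hodge_zero, h5, PLow_smul, PLow_of_mem hm,
            if_pos (by omega), sub_self]
      · rw [epAux_of_not_nodup e l hnd, PLow_zero, hodge_zero, PLow_zero, sub_zero]
  | zero => rw [PLow_zero, hodge_zero, PLow_zero, sub_zero]
  | add x y _ _ hx hy =>
      rw [PLow_add, hodge_add, hodge_add, PLow_add, hx, hy]
      abel
  | smul r x _ hx =>
      rw [PLow_smul, hodge_smul, hodge_smul, PLow_smul, hx, smul_sub]

end Aux

/-- for n odd and p - q ≡ 0,1,4,5 (mod 8), every ±1-eigenform of the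
Hodge operator is recovered from its lower truncation. -/
theorem eigenform_from_lower_truncation
    (p q n : ℕ) (hn : n = p + q)
    {V : Type*} [AddCommGroup V] [Module ℝ V]
    (Q : QuadraticForm ℝ V) (e : Module.Basis (Fin n) ℝ V)
    (horth : ∀ i j : Fin n, i ≠ j → QuadraticMap.polar Q (e i) (e j) = 0)
    (hQpos : ∀ i : Fin n, (i : ℕ) < p → Q (e i) = 1)
    (hQneg : ∀ i : Fin n, p ≤ (i : ℕ) → Q (e i) = -1)
    (hodd : Odd n) (hsig : ((p : ℤ) - q) % 8 ∈ ({0, 1, 4, 5} : Set ℤ)) :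
    ∀ f : ExteriorAlgebra ℝ V,
      (hodge Q e f = f →
        f = PLow n f + hodge Q e (PLow n f) ∧ f = (2 : ℝ) • Pplus Q e (PLow n f)) ∧
      (hodge Q e f = -f →
        f = PLow n f - hodge Q e (PLow n f) ∧ f = (2 : ℝ) • Pminus Q e (PLow n f)) := by
  intro f
  have key := core Q e horth hodd f
  constructor
  · intro h
    have h1 : f = PLow n f + hodge Q e (PLow n f) := by
      rw [key, h]; abel
    refine ⟨h1, ?_⟩
    rw [Pplus, smul_smul]
    norm_num
    exact h1
  · intro h
    have h1 : f = PLow n f - hodge Q e (PLow n f) := by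
      rw [key, h, PLow_neg]; abel
    refine ⟨h1, ?_⟩
    rw [Pminus, smul_smul]
    norm_num
    exact h1
end

section
/- Suppose n is odd and (p - q : ℤ) % 8 ∈ {0, 1, 4, 5}. Then the restriction of P₊ to Γ_L := {f ∈ Λ(V) | P_L f = f} is a bijection onto Γ₊ := {f ∈ Λ(V) | ⋆f = f} whose inverse is x ↦ 2 • P_L x, and it intertwines the products: P₊(f ◆₊ g) = P₊(f) ⋄ P₊(g) for all f, g ∈ Γ_L. The analogous statement holds for P₋, Γ₋ := {f | ⋆f = -f} and ◆₋. Hence (Γ_L, ◆₊) is isomorphic to (Γ₊, ⋄) and (Γ_L, ◆₋) is isomorphic to (Γ₋, ⋄) as algebras. -/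
open CliffordAlgebra ExteriorAlgebra

namespace TruncAux

variable {V : Type*} [AddCommGroup V] [Module ℝ V] {n : ℕ}

noncomputable def cmon (Q : QuadraticForm ℝ V) (e : Module.Basis (Fin n) ℝ V) (l : List (Fin n)) :
    CliffordAlgebra Q :=
  (l.map fun i => CliffordAlgebra.ι Q (e i)).prod

variable {Q : QuadraticForm ℝ V} {e : Module.Basis (Fin n) ℝ V}

@[simp] lemma cmon_nil : cmon Q e [] = 1 := rfl

@[simp] lemma cmon_cons (i : Fin n) (l : List (Fin n)) :
    cmon Q e (i :: l) = CliffordAlgebra.ι Q (e i) * cmon Q e l := by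
  simp [cmon]

lemma cmon_append (l m : List (Fin n)) :
    cmon Q e (l ++ m) = cmon Q e l * cmon Q e m := by
  simp [cmon]

variable (horth : ∀ i j : Fin n, i ≠ j → QuadraticMap.polar Q (e i) (e j) = 0)

include horth in
lemma anticomm {i j : Fin n} (hij : i ≠ j) :
    CliffordAlgebra.ι Q (e i) * CliffordAlgebra.ι Q (e j)
      = -(CliffordAlgebra.ι Q (e j) * CliffordAlgebra.ι Q (e i)) := by
  refine eq_neg_of_add_eq_zero_left ?_
  rw [CliffordAlgebra.ι_mul_ι_add_swap, horth i j hij, map_zero]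

include horth in
lemma move : ∀ (m : List (Fin n)) (i : Fin n), i ∈ m →
    ∃ c : ℝ, CliffordAlgebra.ι Q (e i) * cmon Q e m = c • cmon Q e (m.erase i) := by
  intro m
  induction m with
  | nil => simp
  | cons j t ih =>
    intro i hi
    rcases eq_or_ne i j with rfl | hij
    · refine ⟨Q (e i), ?_⟩
      rw [List.erase_cons_head, cmon_cons, ← mul_assoc, CliffordAlgebra.ι_sq_scalar,
        Algebra.smul_def]
    · have hit : i ∈ t := by
        rcases List.mem_cons.mp hi with h | h
        · exact absurd h hij
        · exact h
      obtain ⟨c, hc⟩ := ih i hit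
      refine ⟨-c, ?_⟩
      rw [List.erase_cons_tail (by simpa using hij.symm), cmon_cons, cmon_cons, ← mul_assoc,
        anticomm horth hij, neg_mul, mul_assoc, hc, mul_smul_comm, neg_smul]

include horth in
lemma past : ∀ (m : List (Fin n)) (i : Fin n), i ∉ m →
    cmon Q e m * CliffordAlgebra.ι Q (e i)
      = ((-1 : ℝ)) ^ m.length • (CliffordAlgebra.ι Q (e i) * cmon Q e m) := by
  intro m
  induction m with
  | nil => simp
  | cons j t ih =>
    intro i hi
    have hij : i ≠ j := fun h => hi (h ▸ List.mem_cons_self)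
    have hit : i ∉ t := fun h => hi (List.mem_cons_of_mem _ h)
    rw [cmon_cons, mul_assoc, ih i hit, mul_smul_comm, ← mul_assoc,
      anticomm horth hij.symm, List.length_cons, pow_succ]
    rw [neg_mul, smul_neg, ← neg_smul, mul_assoc, mul_neg_one]

noncomputable def sgn : ℕ → ℝ
  | 0 => 1
  | k + 1 => (-1 : ℝ) ^ k * sgn k

include horth in
lemma cmon_sq : ∀ m : List (Fin n), m.Nodup →
    cmon Q e m * cmon Q e m
      = (sgn m.length * ((m.map fun i => Q (e i)).prod)) • (1 : CliffordAlgebra Q) := by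
  intro m
  induction m with
  | nil => simp [sgn]
  | cons i t ih =>
    intro hnd
    have hit : i ∉ t := (List.nodup_cons.mp hnd).1
    have hnt : t.Nodup := (List.nodup_cons.mp hnd).2
    rw [cmon_cons, mul_assoc, ← mul_assoc (cmon Q e t), past horth t i hit, smul_mul_assoc,
      mul_smul_comm, ← mul_assoc, ← mul_assoc, CliffordAlgebra.ι_sq_scalar, mul_assoc, ih hnt,
      mul_smul_comm, mul_one, Algebra.algebraMap_eq_smul_one, smul_smul, smul_smul]
    congr 1
    simp only [List.length_cons, List.map_cons, List.prod_cons, sgn]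
    ring

include horth in
lemma compl : ∀ l : List (Fin n), l.Nodup →
    ∃ (c : ℝ) (m : List (Fin n)), m.Nodup ∧ m.toFinset = l.toFinsetᶜ ∧
      cmon Q e (l ++ List.finRange n) = c • cmon Q e m := by
  intro l
  induction l with
  | nil =>
    intro _
    exact ⟨1, List.finRange n, List.nodup_finRange n, by simp, by simp⟩
  | cons i t ih =>
    intro hnd
    have hit : i ∉ t := (List.nodup_cons.mp hnd).1
    obtain ⟨c, m, hm, hmc, hc⟩ := ih (List.nodup_cons.mp hnd).2
    have him : i ∈ m := by
      rw [← List.mem_toFinset, hmc, Finset.mem_compl, List.mem_toFinset]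
      exact hit
    obtain ⟨c', hc'⟩ := move horth m i him
    refine ⟨c * c', m.erase i, hm.erase i, ?_, ?_⟩
    · ext j
      simp only [List.mem_toFinset, List.Nodup.mem_erase_iff hm, Finset.mem_compl]
      rw [← List.mem_toFinset, hmc]
      simp [List.mem_toFinset, and_comm, not_or]
    · rw [List.cons_append, cmon_cons, hc, mul_smul_comm, hc', smul_smul]

lemma contract_zero (d : Module.Dual ℝ V) : ∀ l : List (Fin n),
    (∀ i ∈ l, d (e i) = 0) → contractLeft (Q := Q) d (cmon Q e l) = 0 := by
  intro l
  induction l with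
  | nil => simp
  | cons i t ih =>
    intro h
    rw [cmon_cons, CliffordAlgebra.contractLeft_ι_mul, h i (List.mem_cons_self),
      ih fun j hj => h j (List.mem_cons_of_mem _ hj), zero_smul, mul_zero, sub_zero]

include horth in
lemma eqE : ∀ l : List (Fin n), l.Nodup →
    equivExterior Q (cmon Q e l) = cmon (0 : QuadraticForm ℝ V) e l := by
  have heq : ∀ x, equivExterior Q x
      = changeForm (changeForm.associated_neg_proof (Q := Q)) x := fun _ => rfl
  intro l
  induction l with
  | nil =>
    simp only [cmon_nil, heq]
    intro _
    exact changeForm_one _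
  | cons i t ih =>
    intro hnd
    have hit : i ∉ t := (List.nodup_cons.mp hnd).1
    have hB : ∀ j ∈ t, (QuadraticMap.associated (R := ℝ) (-Q)) (e i) (e j) = 0 := by
      intro j hj
      have hij : i ≠ j := fun h => hit (h ▸ hj)
      have hz : (-Q) (e i + e j) - (-Q) (e i) - (-Q) (e j) = 0 := by
        have := horth i j hij
        simp only [QuadraticMap.polar] at this
        simp only [QuadraticMap.neg_apply]
        linarith
      rw [QuadraticMap.associated_apply, hz, smul_zero]
    rw [cmon_cons, heq, changeForm_ι_mul, ← heq, ih (List.nodup_cons.mp hnd).2,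
      contract_zero _ _ hB, sub_zero, cmon_cons]


def monSet (Q : QuadraticForm ℝ V) (e : Module.Basis (Fin n) ℝ V) : Set (CliffordAlgebra Q) :=
  {x | ∃ m : List (Fin n), m.Nodup ∧ x = cmon Q e m}

include horth in
lemma mul_mem_span (i : Fin n) {x : CliffordAlgebra Q}
    (hx : x ∈ Submodule.span ℝ (monSet Q e)) :
    CliffordAlgebra.ι Q (e i) * x ∈ Submodule.span ℝ (monSet Q e) := by
  induction hx using Submodule.span_induction with
  | mem y hy =>
    obtain ⟨m, hm, rfl⟩ := hy
    by_cases him : i ∈ m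
    · obtain ⟨c, hc⟩ := move horth m i him
      rw [hc]
      exact Submodule.smul_mem _ _ (Submodule.subset_span ⟨m.erase i, hm.erase i, rfl⟩)
    · exact Submodule.subset_span ⟨i :: m, List.nodup_cons.mpr ⟨him, hm⟩, (cmon_cons i m).symm⟩
  | zero => rw [mul_zero]; exact Submodule.zero_mem _
  | add y z _ _ hy hz => rw [mul_add]; exact Submodule.add_mem _ hy hz
  | smul c y _ hy => rw [mul_smul_comm]; exact Submodule.smul_mem _ _ hy

include horth in
lemma reduce : ∀ l : List (Fin n), cmon Q e l ∈ Submodule.span ℝ (monSet Q e) := by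
  intro l
  induction l with
  | nil => exact Submodule.subset_span ⟨[], List.nodup_nil, rfl⟩
  | cons i t ih => rw [cmon_cons]; exact mul_mem_span horth i ih

include horth in
lemma span_top : Submodule.span ℝ (monSet Q e) = ⊤ := by
  rw [Submodule.eq_top_iff']
  intro x
  induction x using CliffordAlgebra.induction with
  | algebraMap r =>
    rw [Algebra.algebraMap_eq_smul_one]
    exact Submodule.smul_mem _ _ (Submodule.subset_span ⟨[], List.nodup_nil, rfl⟩)
  | ι v =>
    have hv : v = ∑ j : Fin n, e.repr v j • e j := (e.sum_repr v).symm
    rw [hv, map_sum]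
    refine Submodule.sum_mem _ fun j _ => ?_
    rw [map_smul]
    refine Submodule.smul_mem _ _ (Submodule.subset_span ⟨[j], by simp, ?_⟩)
    simp
  | mul x y hx hy =>
    have hxy := Submodule.mul_mem_mul hx hy
    rw [Submodule.span_mul_span] at hxy
    refine Submodule.span_le.mpr ?_ hxy
    rintro z ⟨a, ha, b, hb, rfl⟩
    obtain ⟨ma, hma, rfl⟩ := ha
    obtain ⟨mb, hmb, rfl⟩ := hb
    show cmon Q e ma * cmon Q e mb ∈ _
    rw [← cmon_append]
    exact reduce horth _
  | add x y hx hy => exact Submodule.add_mem _ hx hy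

lemma sgn_two (k : ℕ) : sgn (k + 2) = - sgn k := by
  have h2 : ((-1 : ℝ) ^ k) * ((-1 : ℝ) ^ k) = 1 := by
    rw [← pow_add]
    exact Even.neg_one_pow ⟨k, rfl⟩
  show (-1 : ℝ) ^ (k + 1) * ((-1 : ℝ) ^ k * sgn k) = - sgn k
  rw [pow_succ]
  linear_combination (-(sgn k)) * h2

lemma sgn_four (k : ℕ) : sgn (k + 4) = sgn k := by
  rw [show k + 4 = (k + 2) + 2 by omega, sgn_two, sgn_two, neg_neg]

lemma sgn_mod : ∀ (a b : ℕ), sgn (4 * a + b) = sgn b := by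
  intro a
  induction a with
  | zero => simp
  | succ a ih =>
    intro b
    rw [show 4 * (a + 1) + b = (4 * a + b) + 4 by ring, sgn_four, ih]

lemma sgn_key (p q n : ℕ) (hn : n = p + q) (hodd : Odd n)
    (hsig : ((p : ℤ) - q) % 8 ∈ ({0, 1, 4, 5} : Set ℤ)) :
    sgn n * (-1 : ℝ) ^ q = 1 := by
  have hn2 : n % 2 = 1 := Nat.odd_iff.mp hodd
  simp only [Set.mem_insert_iff, Set.mem_singleton_iff] at hsig
  have hcase : (n % 4 = 1 ∧ q % 2 = 0) ∨ (n % 4 = 3 ∧ q % 2 = 1) := by omega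
  obtain ⟨h4, h2⟩ | ⟨h4, h2⟩ := hcase
  · rw [show n = 4 * (n / 4) + 1 by omega, sgn_mod,
      Even.neg_one_pow (Nat.even_iff.mpr h2)]
    norm_num [sgn]
  · rw [show n = 4 * (n / 4) + 3 by omega, sgn_mod,
      Odd.neg_one_pow (Nat.odd_iff.mpr h2)]
    norm_num [sgn]

lemma prodQ (p q : ℕ) (hn : n = p + q)
    (hQpos : ∀ i : Fin n, (i : ℕ) < p → Q (e i) = 1)
    (hQneg : ∀ i : Fin n, p ≤ (i : ℕ) → Q (e i) = -1) :
    ((List.finRange n).map fun i => Q (e i)).prod = (-1 : ℝ) ^ q := by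
  have h1 : ((List.finRange n).map fun i => Q (e i)).prod = ∏ i : Fin n, Q (e i) :=
    (Fin.prod_univ_def _).symm
  have hpn : p ≤ n := by omega
  rw [h1,
    Finset.prod_congr rfl
      (fun i _ => show Q (e i) = (fun k : ℕ => if k < p then (1 : ℝ) else -1) (i : ℕ) by
        by_cases h : (i : ℕ) < p
        · simp [h, hQpos i h]
        · simp [h, hQneg i (le_of_not_gt h)]),
    Fin.prod_univ_eq_prod_range (fun k : ℕ => if k < p then (1 : ℝ) else -1) n,
    Finset.range_eq_Ico, ← Finset.prod_Ico_consecutive _ (Nat.zero_le p) hpn]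
  have ha : (∏ k ∈ Finset.Ico 0 p, (if k < p then (1 : ℝ) else -1)) = 1 :=
    Finset.prod_eq_one fun k hk => if_pos (Finset.mem_Ico.mp hk).2
  have hb : (∏ k ∈ Finset.Ico p n, (if k < p then (1 : ℝ) else -1)) = (-1 : ℝ) ^ q := by
    rw [Finset.prod_congr rfl
      (fun k hk => if_neg (not_lt.mpr (Finset.mem_Ico.mp hk).1)),
      Finset.prod_const, Nat.card_Ico, show n - p = q by omega]
  rw [ha, hb, one_mul]

lemma cliffVol_eq : cliffVol Q e = cmon Q e (List.finRange n) := rfl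

include horth in
lemma vol_sq (p q : ℕ) (hn : n = p + q)
    (hQpos : ∀ i : Fin n, (i : ℕ) < p → Q (e i) = 1)
    (hQneg : ∀ i : Fin n, p ≤ (i : ℕ) → Q (e i) = -1)
    (hodd : Odd n) (hsig : ((p : ℤ) - q) % 8 ∈ ({0, 1, 4, 5} : Set ℤ)) :
    cliffVol Q e * cliffVol Q e = 1 := by
  rw [cliffVol_eq, cmon_sq horth _ (List.nodup_finRange n), List.length_finRange,
    prodQ p q hn hQpos hQneg, sgn_key p q n hn hodd hsig, one_smul]

noncomputable def hodgeL (Q : QuadraticForm ℝ V) (e : Module.Basis (Fin n) ℝ V) :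
    ExteriorAlgebra ℝ V →ₗ[ℝ] ExteriorAlgebra ℝ V :=
  (equivExterior Q).toLinearMap ∘ₗ LinearMap.mulRight ℝ (cliffVol Q e) ∘ₗ
    (equivExterior Q).symm.toLinearMap

lemma hodge_eq (f : ExteriorAlgebra ℝ V) : hodge Q e f = hodgeL Q e f := by
  simp only [hodge, graf, volForm, hodgeL, LinearMap.coe_comp, Function.comp_apply,
    LinearEquiv.coe_coe, LinearMap.mulRight_apply, LinearEquiv.symm_apply_apply]

noncomputable def PLowL (n' : ℕ) : ExteriorAlgebra ℝ V →ₗ[ℝ] ExteriorAlgebra ℝ V :=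
  ∑ k ∈ Finset.range (n' / 2 + 1),
    (⋀[ℝ]^k V).subtype ∘ₗ (DirectSum.component ℝ ℕ (fun i => ⋀[ℝ]^i V) k) ∘ₗ
      (DirectSum.decomposeLinearEquiv (fun i : ℕ => ⋀[ℝ]^i V)).toLinearMap

lemma PLow_eq (n' : ℕ) (f : ExteriorAlgebra ℝ V) : PLow (V := V) n' f = PLowL n' f := by
  rw [PLow, PLowL, LinearMap.sum_apply]
  refine Finset.sum_congr rfl fun k _ => ?_
  rfl

lemma emon_mem (l : List (Fin n)) :
    cmon (0 : QuadraticForm ℝ V) e l ∈ ⋀[ℝ]^(l.length) V := by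
  induction l with
  | nil =>
    rw [cmon_nil]
    show (1 : ExteriorAlgebra ℝ V) ∈ LinearMap.range (ExteriorAlgebra.ι ℝ (M := V)) ^ 0
    rw [pow_zero]
    exact Submodule.mem_one.mpr ⟨1, map_one _⟩
  | cons i t ih =>
    rw [cmon_cons]
    show _ ∈ LinearMap.range (ExteriorAlgebra.ι ℝ (M := V)) ^ (t.length + 1)
    rw [pow_succ']
    exact Submodule.mul_mem_mul (LinearMap.mem_range_self _ (e i)) ih

lemma PLowL_emon_low {n' : ℕ} {l : List (Fin n)} (h : l.length ≤ n' / 2) :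
    PLowL (V := V) n' (cmon (0 : QuadraticForm ℝ V) e l) = cmon 0 e l := by
  rw [PLowL, LinearMap.sum_apply]
  have : ∀ k ∈ Finset.range (n' / 2 + 1), k ≠ l.length →
      ((⋀[ℝ]^k V).subtype ∘ₗ (DirectSum.component ℝ ℕ (fun i => ⋀[ℝ]^i V) k) ∘ₗ
        (DirectSum.decomposeLinearEquiv (fun i : ℕ => ⋀[ℝ]^i V)).toLinearMap)
        (cmon 0 e l) = 0 := by
    intro k _ hk
    simp only [LinearMap.coe_comp, Function.comp_apply, LinearEquiv.coe_coe,
      DirectSum.decomposeLinearEquiv_apply, Submodule.coe_subtype]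
    erw [DirectSum.decompose_of_mem_ne (fun i : ℕ => ⋀[ℝ]^i V) (emon_mem (e := e) l) hk.symm]
  rw [Finset.sum_eq_single l.length this
    (fun hmem => absurd (Finset.mem_range.mpr (Nat.lt_succ_of_le h)) hmem)]
  simp only [LinearMap.coe_comp, Function.comp_apply, LinearEquiv.coe_coe,
    DirectSum.decomposeLinearEquiv_apply, Submodule.coe_subtype]
  erw [DirectSum.decompose_of_mem_same (fun i : ℕ => ⋀[ℝ]^i V) (emon_mem (e := e) l)]

lemma PLowL_emon_high {n' : ℕ} {l : List (Fin n)} (h : n' / 2 < l.length) :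
    PLowL (V := V) n' (cmon (0 : QuadraticForm ℝ V) e l) = 0 := by
  rw [PLowL, LinearMap.sum_apply]
  refine Finset.sum_eq_zero fun k hk => ?_
  have hk' : k ≠ l.length := by
    have := Finset.mem_range.mp hk
    omega
  simp only [LinearMap.coe_comp, Function.comp_apply, LinearEquiv.coe_coe,
    DirectSum.decomposeLinearEquiv_apply, Submodule.coe_subtype]
  erw [DirectSum.decompose_of_mem_ne (fun i : ℕ => ⋀[ℝ]^i V) (emon_mem (e := e) l) hk'.symm]

include horth in
lemma hodgeL_emon {l : List (Fin n)} (hl : l.Nodup) :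
    ∃ (c : ℝ) (m : List (Fin n)), m.Nodup ∧ m.length = n - l.length ∧
      hodgeL Q e (cmon (0 : QuadraticForm ℝ V) e l) = c • cmon 0 e m := by
  obtain ⟨c, m, hm, hmc, hc⟩ := compl horth l hl
  refine ⟨c, m, hm, ?_, ?_⟩
  · rw [← List.toFinset_card_of_nodup hm, hmc, Finset.card_compl, Fintype.card_fin,
      List.toFinset_card_of_nodup hl]
  · have hsymm : (equivExterior Q).symm (cmon 0 e l) = cmon Q e l :=
      (LinearEquiv.symm_apply_eq _).mpr (eqE horth l hl).symm
    rw [hodgeL]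
    simp only [LinearMap.coe_comp, Function.comp_apply, LinearEquiv.coe_coe,
      LinearMap.mulRight_apply]
    rw [hsymm, cliffVol_eq, ← cmon_append, hc, map_smul, eqE horth m hm]

lemma horth0 : ∀ i j : Fin n, i ≠ j →
    QuadraticMap.polar ⇑(0 : QuadraticForm ℝ V) (e i) (e j) = 0 :=
  fun _ _ _ => by simp [QuadraticMap.polar]

include horth in
lemma hodgeL_hodgeL (p q : ℕ) (hn : n = p + q)
    (hQpos : ∀ i : Fin n, (i : ℕ) < p → Q (e i) = 1)
    (hQneg : ∀ i : Fin n, p ≤ (i : ℕ) → Q (e i) = -1)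
    (hodd : Odd n) (hsig : ((p : ℤ) - q) % 8 ∈ ({0, 1, 4, 5} : Set ℤ))
    (f : ExteriorAlgebra ℝ V) : hodgeL Q e (hodgeL Q e f) = f := by
  simp only [hodgeL, LinearMap.coe_comp, Function.comp_apply, LinearEquiv.coe_coe,
    LinearMap.mulRight_apply]
  rw [LinearEquiv.symm_apply_apply, mul_assoc,
    vol_sq horth p q hn hQpos hQneg hodd hsig, mul_one, LinearEquiv.apply_symm_apply]

lemma LL_apply (e' : Module.Basis (Fin n) ℝ V) (n' : ℕ) (f : ExteriorAlgebra ℝ V) :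
    PLowL (V := V) n' (PLowL n' f) = PLowL n' f := by
  have : (PLowL (V := V) n').comp (PLowL n') = PLowL n' := by
    refine LinearMap.ext_on (span_top (horth0 (e := e'))) ?_
    rintro x ⟨m, hm, rfl⟩
    rcases le_or_gt m.length (n' / 2) with h | h
    · rw [LinearMap.comp_apply, PLowL_emon_low (e := e') h, PLowL_emon_low (e := e') h]
    · rw [LinearMap.comp_apply, PLowL_emon_high (e := e') h, map_zero]
  exact LinearMap.congr_fun this f

include horth in
lemma LHL_apply (hn2 : n % 2 = 1) (f : ExteriorAlgebra ℝ V) :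
    PLowL n (hodgeL Q e (PLowL n f)) = 0 := by
  have : (PLowL (V := V) n).comp ((hodgeL Q e).comp (PLowL n)) = 0 := by
    refine LinearMap.ext_on (span_top (horth0 (e := e))) ?_
    rintro x ⟨m, hm, rfl⟩
    rcases le_or_gt m.length (n / 2) with h | h
    · obtain ⟨c, m', hm', hlen, hc⟩ := hodgeL_emon horth hm
      have hml : m.length ≤ n := by
        have := hm.length_le_card
        simpa [Fintype.card_fin] using this
      rw [LinearMap.comp_apply, LinearMap.comp_apply, PLowL_emon_low (e := e) h, hc,
        map_smul, PLowL_emon_high (e := e) (by omega), smul_zero, LinearMap.zero_apply]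
    · rw [LinearMap.comp_apply, LinearMap.comp_apply, PLowL_emon_high (e := e) h,
        map_zero, map_zero, LinearMap.zero_apply]
  exact LinearMap.congr_fun this f

include horth in
lemma LHhigh_apply (hn2 : n % 2 = 1) (f : ExteriorAlgebra ℝ V) :
    PLowL n (hodgeL Q e (f - PLowL n f)) = hodgeL Q e (f - PLowL n f) := by
  have : (PLowL (V := V) n).comp ((hodgeL Q e).comp (LinearMap.id - PLowL n))
      = (hodgeL Q e).comp (LinearMap.id - PLowL n) := by
    refine LinearMap.ext_on (span_top (horth0 (e := e))) ?_
    rintro x ⟨m, hm, rfl⟩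
    have hml : m.length ≤ n := by
      have := hm.length_le_card
      simpa [Fintype.card_fin] using this
    rcases le_or_gt m.length (n / 2) with h | h
    · rw [LinearMap.comp_apply, LinearMap.comp_apply, LinearMap.sub_apply,
        LinearMap.id_apply, PLowL_emon_low (e := e) h, sub_self, map_zero, map_zero]
    · obtain ⟨c, m', hm', hlen, hc⟩ := hodgeL_emon horth hm
      rw [LinearMap.comp_apply, LinearMap.comp_apply, LinearMap.sub_apply,
        LinearMap.id_apply, PLowL_emon_high (e := e) h, sub_zero, hc, map_smul,
        PLowL_emon_low (e := e) (by omega)]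
  have h2 := LinearMap.congr_fun this f
  simpa using h2

lemma graf_hodge (a b : ExteriorAlgebra ℝ V) :
    hodge Q e (graf Q a b) = graf Q a (hodge Q e b) := by
  simp only [hodge, graf, volForm]
  rw [LinearEquiv.symm_apply_apply, LinearEquiv.symm_apply_apply,
    LinearEquiv.symm_apply_apply, mul_assoc]

end TruncAux

/-- for n odd and p - q ≡ 0,1,4,5 (mod 8), P₊ restricts to a bijection
from Γ_L onto Γ₊ with inverse x ↦ 2 • P_L x, intertwining ◆₊ with ⋄; and similarly
for P₋, Γ₋ and ◆₋. -/
theorem truncated_algebra_isomorphic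
    (p q n : ℕ) (hn : n = p + q)
    {V : Type*} [AddCommGroup V] [Module ℝ V]
    (Q : QuadraticForm ℝ V) (e : Module.Basis (Fin n) ℝ V)
    (horth : ∀ i j : Fin n, i ≠ j → QuadraticMap.polar Q (e i) (e j) = 0)
    (hQpos : ∀ i : Fin n, (i : ℕ) < p → Q (e i) = 1)
    (hQneg : ∀ i : Fin n, p ≤ (i : ℕ) → Q (e i) = -1)
    (hodd : Odd n) (hsig : ((p : ℤ) - q) % 8 ∈ ({0, 1, 4, 5} : Set ℤ)) :
    -- P₊ maps Γ_L into Γ₊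
    (∀ f : ExteriorAlgebra ℝ V, PLow n f = f →
      hodge Q e (Pplus Q e f) = Pplus Q e f) ∧
    -- x ↦ 2 • P_L x is a left inverse on Γ_L
    (∀ f : ExteriorAlgebra ℝ V, PLow n f = f →
      (2 : ℝ) • PLow n (Pplus Q e f) = f) ∧
    -- x ↦ 2 • P_L x maps Γ₊ into Γ_L and is a right inverse
    (∀ x : ExteriorAlgebra ℝ V, hodge Q e x = x →
      PLow n ((2 : ℝ) • PLow n x) = (2 : ℝ) • PLow n x ∧
      Pplus Q e ((2 : ℝ) • PLow n x) = x) ∧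
    -- P₊ intertwines ◆₊ with ⋄ on Γ_L
    (∀ f g : ExteriorAlgebra ℝ V, PLow n f = f → PLow n g = g →
      Pplus Q e (tGrafP Q e f g) = graf Q (Pplus Q e f) (Pplus Q e g)) ∧
    -- the analogous statements for P₋, Γ₋ and ◆₋
    (∀ f : ExteriorAlgebra ℝ V, PLow n f = f →
      hodge Q e (Pminus Q e f) = -(Pminus Q e f)) ∧
    (∀ f : ExteriorAlgebra ℝ V, PLow n f = f →
      (2 : ℝ) • PLow n (Pminus Q e f) = f) ∧
    (∀ x : ExteriorAlgebra ℝ V, hodge Q e x = -x →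
      PLow n ((2 : ℝ) • PLow n x) = (2 : ℝ) • PLow n x ∧
      Pminus Q e ((2 : ℝ) • PLow n x) = x) ∧
    (∀ f g : ExteriorAlgebra ℝ V, PLow n f = f → PLow n g = g →
      Pminus Q e (tGrafM Q e f g) = graf Q (Pminus Q e f) (Pminus Q e g)) := by
  have hn2 : n % 2 = 1 := Nat.odd_iff.mp hodd
  have hEq : ∀ f, hodge Q e f = TruncAux.hodgeL Q e f := fun f => TruncAux.hodge_eq f
  have hPEq : ∀ f : ExteriorAlgebra ℝ V, PLow n f = TruncAux.PLowL n f :=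
    fun f => TruncAux.PLow_eq n f
  have hHH : ∀ f, hodge Q e (hodge Q e f) = f := fun f => by
    rw [hEq, hEq]
    exact TruncAux.hodgeL_hodgeL horth p q hn hQpos hQneg hodd hsig f
  have hLL : ∀ f, PLow n (PLow n f) = PLow n f := fun f => by
    rw [hPEq (PLow n f), hPEq f]
    exact TruncAux.LL_apply e n f
  have hLHL : ∀ f, PLow n (hodge Q e (PLow n f)) = 0 := fun f => by
    rw [hPEq, hPEq, hEq]
    exact TruncAux.LHL_apply horth hn2 f
  have hI4 : ∀ f, PLow n (hodge Q e (f - PLow n f)) = hodge Q e (f - PLow n f) := fun f => by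
    rw [hPEq, hPEq, hEq]
    exact TruncAux.LHhigh_apply horth hn2 f
  have hHadd : ∀ x y, hodge Q e (x + y) = hodge Q e x + hodge Q e y := fun x y => by
    rw [hEq, hEq, hEq]; exact map_add _ _ _
  have hHsub : ∀ x y, hodge Q e (x - y) = hodge Q e x - hodge Q e y := fun x y => by
    rw [hEq, hEq, hEq]; exact map_sub _ _ _
  have hHsmul : ∀ (c : ℝ) x, hodge Q e (c • x) = c • hodge Q e x := fun c x => by
    rw [hEq, hEq]; exact map_smul _ _ _
  have hLadd : ∀ x y : ExteriorAlgebra ℝ V, PLow n (x + y) = PLow n x + PLow n y :=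
    fun x y => by rw [hPEq, hPEq, hPEq]; exact map_add _ _ _
  have hLsub : ∀ x y : ExteriorAlgebra ℝ V, PLow n (x - y) = PLow n x - PLow n y :=
    fun x y => by rw [hPEq, hPEq, hPEq]; exact map_sub _ _ _
  have hLsmul : ∀ (c : ℝ) (x : ExteriorAlgebra ℝ V), PLow n (c • x) = c • PLow n x :=
    fun c x => by rw [hPEq, hPEq]; exact map_smul _ _ _
  have hLneg : ∀ x : ExteriorAlgebra ℝ V, PLow n (-x) = -(PLow n x) := fun x => by
    rw [hPEq, hPEq]; exact map_neg _ _
  have hP1 : ∀ g, hodge Q e (Pplus Q e g) = Pplus Q e g := fun g => by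
    rw [Pplus, hHsmul, hHadd, hHH, add_comm]
  have hP1m : ∀ g, hodge Q e (Pminus Q e g) = -(Pminus Q e g) := fun g => by
    rw [Pminus, hHsmul, hHsub, hHH, ← smul_neg, neg_sub]
  have hLeft : ∀ f, PLow n f = f → (2 : ℝ) • PLow n (Pplus Q e f) = f := by
    intro f hf
    have h0 : PLow n (hodge Q e f) = 0 := by
      rw [← hf]
      exact hLHL f
    rw [Pplus, hLsmul, hLadd, h0, add_zero, hf, smul_smul]
    norm_num
  have hLeftm : ∀ f, PLow n f = f → (2 : ℝ) • PLow n (Pminus Q e f) = f := by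
    intro f hf
    have h0 : PLow n (hodge Q e f) = 0 := by
      rw [← hf]
      exact hLHL f
    rw [Pminus, hLsmul, hLsub, h0, sub_zero, hf, smul_smul]
    norm_num
  have hRight : ∀ x, hodge Q e x = x → Pplus Q e ((2 : ℝ) • PLow n x) = x := by
    intro x hx
    have h4 := hI4 x
    rw [hHsub, hx, hLsub, hLHL, sub_zero] at h4
    rw [Pplus, hHsmul]
    set B := hodge Q e (PLow n x) with hB
    set A := PLow n x with hA
    rw [h4]
    module
  have hRightm : ∀ x, hodge Q e x = -x → Pminus Q e ((2 : ℝ) • PLow n x) = x := by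
    intro x hx
    have h4 := hI4 x
    rw [hHsub, hx, hLsub, hLHL, sub_zero, hLneg] at h4
    rw [Pminus, hHsmul]
    set B := hodge Q e (PLow n x) with hB
    set A := PLow n x with hA
    have h4' : A = B + x := by
      have h5 := congrArg Neg.neg h4
      simpa [neg_sub] using h5
    rw [h4']
    module
  have hgraf_neg : ∀ a b : ExteriorAlgebra ℝ V, graf Q a (-b) = -graf Q a b := fun a b => by
    simp [graf, mul_neg]
  refine ⟨fun f _ => hP1 f, hLeft, fun x hx => ⟨by rw [hLsmul, hLL], hRight x hx⟩,
    ?_, fun f _ => hP1m f, hLeftm, fun x hx => ⟨by rw [hLsmul, hLL], hRightm x hx⟩, ?_⟩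
  · intro f g _ _
    have hy : hodge Q e (graf Q (Pplus Q e f) (Pplus Q e g))
        = graf Q (Pplus Q e f) (Pplus Q e g) := by
      rw [TruncAux.graf_hodge, hP1]
    rw [tGrafP]
    exact hRight _ hy
  · intro f g _ _
    have hy : hodge Q e (graf Q (Pminus Q e f) (Pminus Q e g))
        = -(graf Q (Pminus Q e f) (Pminus Q e g)) := by
      rw [TruncAux.graf_hodge, hP1m, hgraf_neg]
    rw [tGrafM]
    exact hRightm _ hy
end
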